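/- arXiv:2509.00817 — 6 statements merged into one kernel-verified Lean document; each statement's English description precedes it below -/
import Mathlib

section
/- Let p > 1 and let f : ℝ → ℝ be continuous, with primitive F(t) = ∫₀ᵗ f(τ) dτ, auxiliary function 𝓕(t) = (1/p)·t·f(t) − F(t), and g(t) = f(t)/(|t|^{p−2}·t) for t ≠ 0. If g is nondecreasing on (0,∞) and nonincreasing on (−∞,0), then 𝓕 is nondecreasing on [0,∞) and nonincreasing on (−∞,0]. In particular, 𝓕(t′) ≤ 𝓕(t) whenever 0 < t′ ≤ t, i.e. condition (f7) of the paper holds with constant α = 1. -/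
open MeasureTheory Set

lemma key_pos (p : ℝ) (hp : 1 < p) (f g : ℝ → ℝ) (hf : Continuous f)
    (hg : ∀ t : ℝ, t ≠ 0 → g t = f t / (|t| ^ (p - 2) * t))
    (hg_inc : MonotoneOn g (Set.Ioi (0:ℝ))) :
    ∀ s t : ℝ, 0 ≤ s → s < t →
      (1 / p) * s * f s - ∫ τ in (0:ℝ)..s, f τ ≤ (1 / p) * t * f t - ∫ τ in (0:ℝ)..t, f τ := by
  intro s t hs hst
  have hp0 : (0:ℝ) < p := by linarith
  have hp1 : (0:ℝ) < p - 1 := by linarith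
  have ht : 0 < t := lt_of_le_of_lt hs hst
  have hfe : ∀ x : ℝ, 0 < x → f x = g x * x ^ (p - 1) := by
    intro x hx
    have hD : |x| ^ (p - 2) * x = x ^ (p - 1) := by
      rw [abs_of_pos hx, show p - 1 = (p - 2) + 1 by ring, Real.rpow_add_one hx.ne']
    rw [hg x hx.ne', hD, div_mul_cancel₀ _ (ne_of_gt (Real.rpow_pos_of_pos hx _))]
  have hcont : Continuous fun x : ℝ => g t * x ^ (p - 1) :=
    continuous_const.mul (Real.continuous_rpow_const hp1.le)
  have hae : ∀ᵐ x ∂(volume.restrict (Icc s t)), f x ≤ g t * x ^ (p - 1) := by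
    have h0 : ∀ᵐ x : ℝ ∂volume, x ≠ (0:ℝ) := by
      rw [ae_iff]; simp [not_ne_iff]
    filter_upwards [ae_restrict_mem measurableSet_Icc,
      h0.filter_mono (ae_mono Measure.restrict_le_self)] with x hx hx0
    have hxpos : 0 < x := lt_of_le_of_ne (hs.trans hx.1) (Ne.symm hx0)
    rw [hfe x hxpos]
    exact mul_le_mul_of_nonneg_right (hg_inc hxpos ht hx.2) (Real.rpow_nonneg hxpos.le _)
  have hint : (∫ τ in s..t, f τ) ≤ g t * ((t ^ p - s ^ p) / p) := by
    have h1 : (∫ τ in s..t, f τ) ≤ ∫ τ in s..t, g t * τ ^ (p - 1) :=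
      intervalIntegral.integral_mono_ae_restrict hst.le (hf.intervalIntegrable s t)
        (hcont.intervalIntegrable s t) hae
    have h2 : (∫ τ in s..t, g t * τ ^ (p - 1)) = g t * ((t ^ p - s ^ p) / p) := by
      rw [intervalIntegral.integral_const_mul, integral_rpow (Or.inl (by linarith))]
      norm_num
    linarith [h1.trans_eq h2]
  have hte : t ^ p = t ^ (p - 1) * t := by
    rw [show p = (p - 1) + 1 by ring, Real.rpow_add_one ht.ne']; ring_nf
  have htf : t * f t = g t * t ^ p := by rw [hfe t ht, hte]; ring
  have hsf : s * f s ≤ g t * s ^ p := by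
    rcases eq_or_lt_of_le hs with h | h
    · rw [← h, Real.zero_rpow hp0.ne']; simp
    · have hse : s ^ p = s ^ (p - 1) * s := by
        rw [show p = (p - 1) + 1 by ring, Real.rpow_add_one h.ne']; ring_nf
      rw [hfe s h, hse]
      calc s * (g s * s ^ (p - 1)) = g s * (s ^ (p - 1) * s) := by ring
        _ ≤ g t * (s ^ (p - 1) * s) :=
          mul_le_mul_of_nonneg_right (hg_inc h ht hst.le)
            (mul_nonneg (Real.rpow_nonneg h.le _) h.le)
  have hadd : (∫ τ in (0:ℝ)..s, f τ) + (∫ τ in s..t, f τ) = ∫ τ in (0:ℝ)..t, f τ :=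
    intervalIntegral.integral_add_adjacent_intervals (hf.intervalIntegrable 0 s) (hf.intervalIntegrable s t)
  have e1 : g t * ((t ^ p - s ^ p) / p) = (1/p) * (g t * t ^ p) - (1/p) * (g t * s ^ p) := by
    field_simp
  have hsf' : (1/p) * (s * f s) ≤ (1/p) * (g t * s ^ p) :=
    mul_le_mul_of_nonneg_left hsf (by positivity)
  have htf' : (1/p) * (t * f t) = (1/p) * (g t * t ^ p) := by rw [htf]
  nlinarith [hint, hadd, e1, hsf', htf']

lemma key_neg (p : ℝ) (hp : 1 < p) (f g : ℝ → ℝ) (hf : Continuous f)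
    (hg : ∀ t : ℝ, t ≠ 0 → g t = f t / (|t| ^ (p - 2) * t))
    (hg_dec : AntitoneOn g (Set.Iio (0:ℝ))) :
    ∀ s t : ℝ, t ≤ 0 → s < t →
      (1 / p) * t * f t - ∫ τ in (0:ℝ)..t, f τ ≤ (1 / p) * s * f s - ∫ τ in (0:ℝ)..s, f τ := by
  intro s t ht hst
  have hp0 : (0:ℝ) < p := by linarith
  have hp1 : (0:ℝ) < p - 1 := by linarith
  have hs : s < 0 := lt_of_lt_of_le hst ht
  have hfe : ∀ x : ℝ, x < 0 → f x = -(g x * (-x) ^ (p - 1)) := by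
    intro x hx
    have hD : |x| ^ (p - 2) * x = -((-x) ^ (p - 1)) := by
      rw [abs_of_neg hx, show p - 1 = (p - 2) + 1 by ring,
        Real.rpow_add_one (by linarith : -x ≠ 0)]
      ring
    have hne : |x| ^ (p - 2) * x ≠ 0 := by
      rw [hD]
      exact neg_ne_zero.mpr (ne_of_gt (Real.rpow_pos_of_pos (by linarith) _))
    have := hg x hx.ne
    field_simp [hne] at this
    rw [this, hD, div_neg, neg_mul, neg_neg,
      div_mul_cancel₀ _ (ne_of_gt (Real.rpow_pos_of_pos (by linarith) _))]
  have hcont : Continuous fun x : ℝ => -(g s * (-x) ^ (p - 1)) :=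
    (continuous_const.mul ((Real.continuous_rpow_const hp1.le).comp continuous_neg)).neg
  have hae : ∀ᵐ x ∂(volume.restrict (Icc s t)), -(g s * (-x) ^ (p - 1)) ≤ f x := by
    have h0 : ∀ᵐ x : ℝ ∂volume, x ≠ (0:ℝ) := by
      rw [ae_iff]; simp [not_ne_iff]
    filter_upwards [ae_restrict_mem measurableSet_Icc,
      h0.filter_mono (ae_mono Measure.restrict_le_self)] with x hx hx0
    have hxneg : x < 0 := lt_of_le_of_ne (hx.2.trans ht) hx0
    rw [hfe x hxneg]
    have : g x ≤ g s := hg_dec hs hxneg hx.1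
    have hnn : (0:ℝ) ≤ (-x) ^ (p - 1) := Real.rpow_nonneg (by linarith) _
    nlinarith
  have hint : -(g s * (((-s) ^ p - (-t) ^ p) / p)) ≤ ∫ τ in s..t, f τ := by
    have h1 : (∫ τ in s..t, -(g s * (-τ) ^ (p - 1))) ≤ ∫ τ in s..t, f τ :=
      intervalIntegral.integral_mono_ae_restrict hst.le (hcont.intervalIntegrable s t)
        (hf.intervalIntegrable s t) hae
    have h2 : (∫ τ in s..t, -(g s * (-τ) ^ (p - 1)))
        = -(g s * (((-s) ^ p - (-t) ^ p) / p)) := by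
      rw [intervalIntegral.integral_neg, intervalIntegral.integral_const_mul]
      have := intervalIntegral.integral_comp_neg (a := s) (b := t)
        (fun u : ℝ => u ^ (p - 1))
      rw [this, integral_rpow (Or.inl (by linarith))]
      norm_num
    linarith [h2.symm.trans_le h1]
  have hse : (-s) ^ p = (-s) ^ (p - 1) * (-s) := by
    rw [show p = (p - 1) + 1 by ring, Real.rpow_add_one (by linarith : -s ≠ 0)]; ring_nf
  have hsf : s * f s = g s * (-s) ^ p := by rw [hfe s hs, hse]; ring
  have htf : t * f t ≤ g s * (-t) ^ p := by
    rcases eq_or_lt_of_le ht with h | h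
    · rw [h, neg_zero, Real.zero_rpow hp0.ne']; simp
    · have hte : (-t) ^ p = (-t) ^ (p - 1) * (-t) := by
        rw [show p = (p - 1) + 1 by ring, Real.rpow_add_one (by linarith : -t ≠ 0)]; ring_nf
      rw [hfe t h, hte]
      have hgle : g t ≤ g s := hg_dec hs h hst.le
      have hnn : (0:ℝ) ≤ (-t) ^ (p - 1) * (-t) := by
        have := Real.rpow_nonneg (by linarith : (0:ℝ) ≤ -t) (p - 1)
        nlinarith
      nlinarith
  have hadd : (∫ τ in (0:ℝ)..s, f τ) + (∫ τ in s..t, f τ) = ∫ τ in (0:ℝ)..t, f τ :=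
    intervalIntegral.integral_add_adjacent_intervals (hf.intervalIntegrable 0 s) (hf.intervalIntegrable s t)
  have e1 : g s * (((-s) ^ p - (-t) ^ p) / p)
      = (1/p) * (g s * (-s) ^ p) - (1/p) * (g s * (-t) ^ p) := by
    field_simp
  have htf' : (1/p) * (t * f t) ≤ (1/p) * (g s * (-t) ^ p) :=
    mul_le_mul_of_nonneg_left htf (by positivity)
  have hsf' : (1/p) * (s * f s) = (1/p) * (g s * (-s) ^ p) := by rw [hsf]
  nlinarith [hint, hadd, e1, htf', hsf']

/-- If `g(t) = f(t)/(|t|^{p-2}t)` is nondecreasing on `(0,∞)` and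
nonincreasing on `(−∞,0)`, then `𝓕(t) = (1/p)·t·f(t) − F(t)` is nondecreasing on `[0,∞)`
and nonincreasing on `(−∞,0]`; in particular `𝓕(t′) ≤ 𝓕(t)` for `0 < t′ ≤ t`, i.e.
Jeanjean's condition (f7) holds with `α = 1`. -/
theorem f8_implies_f7 (p : ℝ) (hp : 1 < p)
    (f F 𝓕 g : ℝ → ℝ) (hf : Continuous f)
    (hF : ∀ t : ℝ, F t = ∫ τ in (0:ℝ)..t, f τ)
    (h𝓕 : ∀ t : ℝ, 𝓕 t = (1 / p) * t * f t - F t)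
    (hg : ∀ t : ℝ, t ≠ 0 → g t = f t / (|t| ^ (p - 2) * t))
    (hg_inc : MonotoneOn g (Set.Ioi (0:ℝ)))
    (hg_dec : AntitoneOn g (Set.Iio (0:ℝ))) :
    MonotoneOn 𝓕 (Set.Ici (0:ℝ)) ∧ AntitoneOn 𝓕 (Set.Iic (0:ℝ)) ∧
      ∀ t' t : ℝ, 0 < t' → t' ≤ t → 𝓕 t' ≤ 1 * 𝓕 t := by
  have hmono : MonotoneOn 𝓕 (Set.Ici (0:ℝ)) := by
    intro a ha b hb hab
    rcases eq_or_lt_of_le hab with rfl | h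
    · exact le_refl _
    · rw [h𝓕 a, h𝓕 b, hF a, hF b]
      exact key_pos p hp f g hf hg hg_inc a b ha h
  have hanti : AntitoneOn 𝓕 (Set.Iic (0:ℝ)) := by
    intro a ha b hb hab
    rcases eq_or_lt_of_le hab with rfl | h
    · exact le_refl _
    · rw [h𝓕 a, h𝓕 b, hF a, hF b]
      exact key_neg p hp f g hf hg hg_dec a b hb h
  exact ⟨hmono, hanti, fun t' t ht' htt => by
    rw [one_mul]
    exact hmono (le_of_lt ht') (le_of_lt (lt_of_lt_of_le ht' htt)) htt⟩
end

section
/- Let p > 1, t″ > 0 and let f : ℝ → ℝ be continuous, with primitive F(t) = ∫₀ᵗ f(τ) dτ, auxiliary function 𝓕(t) = (1/p)·t·f(t) − F(t), and g(t) = f(t)/(|t|^{p−2}·t) for t ≠ 0. If g is nondecreasing on [t″,∞) and nonincreasing on (−∞,−t″], then 𝓕 is nondecreasing on [t″,∞) and nonincreasing on (−∞,−t″]. -/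
open MeasureTheory Set

/-- Lemma 3.4, first part. If `g(t) = f(t)/(|t|^{p-2}t)` is nondecreasing
on `[t″,∞)` and nonincreasing on `(−∞,−t″]`, then `𝓕(t) = (1/p)·t·f(t) − F(t)` is
nondecreasing on `[t″,∞)` and nonincreasing on `(−∞,−t″]`. -/
theorem f9_implies_mono_F (p t'' : ℝ) (hp : 1 < p) (ht'' : 0 < t'')
    (f F 𝓕 g : ℝ → ℝ) (hf : Continuous f)
    (hF : ∀ t : ℝ, F t = ∫ τ in (0:ℝ)..t, f τ)
    (h𝓕 : ∀ t : ℝ, 𝓕 t = (1 / p) * t * f t - F t)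
    (hg : ∀ t : ℝ, t ≠ 0 → g t = f t / (|t| ^ (p - 2) * t))
    (hg_inc : MonotoneOn g (Set.Ici t''))
    (hg_dec : AntitoneOn g (Set.Iic (-t''))) :
    MonotoneOn 𝓕 (Set.Ici t'') ∧ AntitoneOn 𝓕 (Set.Iic (-t'')) := by
  have hp0 : (0:ℝ) < p := lt_trans one_pos hp
  have hintf : ∀ a b : ℝ, IntervalIntegrable f volume a b :=
    fun a b => hf.intervalIntegrable a b
  -- representation of f for positive arguments
  have keypos : ∀ τ : ℝ, t'' ≤ τ → f τ = g τ * τ ^ (p - 1) := by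
    intro τ hτ
    have hτ0 : 0 < τ := lt_of_lt_of_le ht'' hτ
    have habs : |τ| = τ := abs_of_pos hτ0
    have hd : |τ| ^ (p - 2) * τ = τ ^ (p - 1) := by
      rw [habs, ← Real.rpow_add_one hτ0.ne' (p - 2)]
      congr 1
      ring
    have hne : τ ^ (p - 1) ≠ 0 := (Real.rpow_pos_of_pos hτ0 _).ne'
    have := hg τ hτ0.ne'
    rw [hd] at this
    rw [this]
    field_simp
  -- representation of f for negative arguments
  have keyneg : ∀ τ : ℝ, τ ≤ -t'' → f τ = -(g τ * (-τ) ^ (p - 1)) := by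
    intro τ hτ
    have hτ0 : τ < 0 := lt_of_le_of_lt hτ (by linarith)
    have hτ0' : 0 < -τ := by linarith
    have habs : |τ| = -τ := abs_of_neg hτ0
    have hd : |τ| ^ (p - 2) * τ = -((-τ) ^ (p - 1)) := by
      have e : (-τ) ^ (p - 1) = (-τ) ^ (p - 2) * (-τ) := by
        rw [show p - 1 = p - 2 + 1 by ring, Real.rpow_add_one hτ0'.ne']
      rw [habs, e]
      ring
    have hne : (-τ) ^ (p - 1) ≠ 0 := (Real.rpow_pos_of_pos hτ0' _).ne'
    have := hg τ hτ0.ne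
    rw [hd] at this
    rw [this]
    field_simp
  constructor
  · -- monotone on [t'', ∞)
    intro s hs t ht hst
    simp only [Set.mem_Ici] at hs ht
    have hs0 : 0 < s := lt_of_lt_of_le ht'' hs
    have ht0 : 0 < t := lt_of_lt_of_le ht'' ht
    -- integrability of the comparison function
    have hcont : ContinuousOn (fun τ : ℝ => g t * τ ^ (p - 1)) (Set.uIcc s t) := by
      apply continuousOn_const.mul
      intro x hx
      have hx0 : 0 < x := lt_of_lt_of_le (lt_min hs0 ht0) hx.1
      exact (Real.continuousAt_rpow_const x (p - 1) (Or.inl hx0.ne')).continuousWithinAt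
    have hintc : IntervalIntegrable (fun τ : ℝ => g t * τ ^ (p - 1)) volume s t :=
      hcont.intervalIntegrable
    -- pointwise bound on [s, t]
    have hmono : ∀ τ ∈ Set.Icc s t, f τ ≤ g t * τ ^ (p - 1) := by
      intro τ hτ
      have hτt'' : t'' ≤ τ := le_trans hs hτ.1
      rw [keypos τ hτt'']
      have hgτ : g τ ≤ g t := hg_inc hτt'' ht hτ.2
      have hpow : 0 < τ ^ (p - 1) := Real.rpow_pos_of_pos (lt_of_lt_of_le ht'' hτt'') _
      exact mul_le_mul_of_nonneg_right hgτ hpow.le |>.trans_eq rfl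
    have hIle : (∫ τ in s..t, f τ) ≤ g t * ((t ^ p - s ^ p) / p) := by
      have h1 : (∫ τ in s..t, f τ) ≤ ∫ τ in s..t, g t * τ ^ (p - 1) :=
        intervalIntegral.integral_mono_on hst (hintf s t) hintc hmono
      have h2 : (∫ τ in s..t, g t * τ ^ (p - 1)) = g t * ((t ^ p - s ^ p) / p) := by
        rw [intervalIntegral.integral_const_mul]
        congr 1
        rw [integral_rpow (Or.inl (by linarith))]
        norm_num
      linarith [h1, h2.le, h2.ge]
    have hsub : (∫ τ in (0:ℝ)..t, f τ) - (∫ τ in (0:ℝ)..s, f τ) = ∫ τ in s..t, f τ :=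
      intervalIntegral.integral_interval_sub_left (hintf 0 t) (hintf 0 s)
    have hts : t * f t = g t * t ^ p := by
      have e : t ^ p = t ^ (p - 1) * t := by
        rw [show p = p - 1 + 1 by ring, Real.rpow_add_one ht0.ne']; norm_num
      rw [keypos t ht, e]; ring
    have hss : s * f s = g s * s ^ p := by
      have e : s ^ p = s ^ (p - 1) * s := by
        rw [show p = p - 1 + 1 by ring, Real.rpow_add_one hs0.ne']; norm_num
      rw [keypos s hs, e]; ring
    have hsp : 0 < s ^ p := Real.rpow_pos_of_pos hs0 _
    have hgs : g s ≤ g t := hg_inc hs ht hst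
    rw [h𝓕, h𝓕, hF, hF]
    have h1 : g t * ((t ^ p - s ^ p) / p) ≤ (g t * t ^ p - g s * s ^ p) / p := by
      rw [mul_div_assoc'] at *
      apply (div_le_div_iff_of_pos_right hp0).mpr
      nlinarith [mul_le_mul_of_nonneg_right hgs hsp.le]
    have h3 : 1 / p * t * f t - 1 / p * s * f s = (g t * t ^ p - g s * s ^ p) / p := by
      rw [mul_assoc, mul_assoc, hts, hss]; ring
    linarith [hIle, hsub, h1, h3]
  · -- antitone on (-∞, -t'']
    intro s hs t ht hst
    simp only [Set.mem_Iic] at hs ht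
    have ht0 : t < 0 := lt_of_le_of_lt ht (by linarith)
    have hs0 : s < 0 := lt_of_le_of_lt hst ht0
    have hnt0 : 0 < -t := by linarith
    have hns0 : 0 < -s := by linarith
    have hcont : ContinuousOn (fun τ : ℝ => -(g s * (-τ) ^ (p - 1))) (Set.uIcc s t) := by
      apply ContinuousOn.neg
      apply continuousOn_const.mul
      intro x hx
      have hx0 : x < 0 := by
        have := hx.2
        have hmax : max s t = t := max_eq_right hst
        have : x ≤ t := by rw [← hmax]; exact hx.2
        linarith
      have h1 : ContinuousAt (fun τ : ℝ => (-τ) ^ (p - 1)) x := by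
        have := (Real.continuousAt_rpow_const (-x) (p - 1) (Or.inl (by linarith : -x ≠ 0)))
        exact this.comp (continuous_neg.continuousAt)
      exact h1.continuousWithinAt
    have hintc : IntervalIntegrable (fun τ : ℝ => -(g s * (-τ) ^ (p - 1))) volume s t :=
      hcont.intervalIntegrable
    -- pointwise lower bound on [s, t]
    have hmono : ∀ τ ∈ Set.Icc s t, -(g s * (-τ) ^ (p - 1)) ≤ f τ := by
      intro τ hτ
      have hτle : τ ≤ -t'' := le_trans hτ.2 ht
      rw [keyneg τ hτle]
      have hgτ : g τ ≤ g s := hg_dec (le_trans hst ht) hτle hτ.1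
      have hpow : 0 < (-τ) ^ (p - 1) :=
        Real.rpow_pos_of_pos (by nlinarith [hτle, ht''] : 0 < -τ) _
      nlinarith
    have hIge : -(g s * (((-s) ^ p - (-t) ^ p) / p)) ≤ (∫ τ in s..t, f τ) := by
      have h1 : (∫ τ in s..t, -(g s * (-τ) ^ (p - 1))) ≤ ∫ τ in s..t, f τ :=
        intervalIntegral.integral_mono_on hst hintc (hintf s t) hmono
      have h2 : (∫ τ in s..t, -(g s * (-τ) ^ (p - 1)))
          = -(g s * (((-s) ^ p - (-t) ^ p) / p)) := by
        rw [intervalIntegral.integral_neg, intervalIntegral.integral_const_mul]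
        congr 2
        have h3 : (∫ τ in s..t, (-τ) ^ (p - 1)) = ∫ x in (-t)..(-s), x ^ (p - 1) := by
          exact intervalIntegral.integral_comp_neg (fun x => x ^ (p - 1))
        rw [h3, integral_rpow (Or.inl (by linarith))]
        norm_num
      linarith [h1, h2.le, h2.ge]
    have hsub : (∫ τ in (0:ℝ)..t, f τ) - (∫ τ in (0:ℝ)..s, f τ) = ∫ τ in s..t, f τ :=
      intervalIntegral.integral_interval_sub_left (hintf 0 t) (hintf 0 s)
    have hts : t * f t = g t * (-t) ^ p := by
      have e : (-t) ^ p = (-t) ^ (p - 1) * (-t) := by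
        rw [show p = p - 1 + 1 by ring, Real.rpow_add_one hnt0.ne']; norm_num
      rw [keyneg t ht, e]; ring
    have hss : s * f s = g s * (-s) ^ p := by
      have e : (-s) ^ p = (-s) ^ (p - 1) * (-s) := by
        rw [show p = p - 1 + 1 by ring, Real.rpow_add_one hns0.ne']; norm_num
      rw [keyneg s hs, e]; ring
    have htp : 0 < (-t) ^ p := Real.rpow_pos_of_pos hnt0 _
    have hgs : g t ≤ g s := hg_dec hs ht hst
    rw [h𝓕, h𝓕, hF, hF]
    have h1 : (g t * (-t) ^ p - g s * (-s) ^ p) / p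
        ≤ -(g s * (((-s) ^ p - (-t) ^ p) / p)) := by
      have e : -(g s * (((-s) ^ p - (-t) ^ p) / p))
          = (g s * (-t) ^ p - g s * (-s) ^ p) / p := by ring
      rw [e]
      apply (div_le_div_iff_of_pos_right hp0).mpr
      nlinarith [mul_le_mul_of_nonneg_right hgs htp.le]
    have h3 : 1 / p * t * f t - 1 / p * s * f s
        = (g t * (-t) ^ p - g s * (-s) ^ p) / p := by
      rw [mul_assoc, mul_assoc, hts, hss]; ring
    linarith [hIge, hsub, h1, h3]
end

section
/- Let p > 1, t″ > 0 and let f : ℝ → ℝ be continuous, with primitive F(t) = ∫₀ᵗ f(τ) dτ, auxiliary function 𝓕(t) = (1/p)·t·f(t) − F(t), and g(t) = f(t)/(|t|^{p−2}·t) for t ≠ 0. If g is nondecreasing on [t″,∞) and nonincreasing on (−∞,−t″], then there exists a constant C₅ > 0 such that 𝓕(s) ≤ 𝓕(t) + C₅ whenever 0 ≤ s ≤ t or t ≤ s ≤ 0. -/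
open MeasureTheory Set

/-- Auxiliary monotonicity lemma on the positive side. -/
lemma aux_mono_F (p t'' : ℝ) (hp : 1 < p) (ht'' : 0 < t'') (f g : ℝ → ℝ)
    (hf : Continuous f)
    (hfg : ∀ τ : ℝ, t'' ≤ τ → f τ = g τ * τ ^ (p - 1))
    (hg_inc : MonotoneOn g (Set.Ici t''))
    {s t : ℝ} (hs : t'' ≤ s) (hst : s ≤ t) :
    (1 / p) * s * f s - ∫ τ in (0:ℝ)..s, f τ ≤
      (1 / p) * t * f t - ∫ τ in (0:ℝ)..t, f τ := by
  have hsp : 0 < s := lt_of_lt_of_le ht'' hs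
  have htp : 0 < t := lt_of_lt_of_le hsp hst
  have ht' : t'' ≤ t := hs.trans hst
  have hp0 : 0 < p := by linarith
  have hgs : g s ≤ g t := hg_inc hs ht' hst
  have hA : (0:ℝ) ≤ s ^ p := Real.rpow_nonneg hsp.le _
  have hss : s ^ (p - 1) * s = s ^ p := by
    rw [← Real.rpow_add_one hsp.ne' (p - 1)]
    congr 1; ring
  have hts : t ^ (p - 1) * t = t ^ p := by
    rw [← Real.rpow_add_one htp.ne' (p - 1)]
    congr 1; ring
  have hcont : Continuous fun x : ℝ => g t * x ^ (p - 1) := by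
    apply continuous_const.mul
    apply Continuous.rpow_const continuous_id
    intro x; right; linarith
  have h1 : ∫ τ in s..t, f τ ≤ ∫ τ in s..t, g t * τ ^ (p - 1) := by
    apply intervalIntegral.integral_mono_on hst (hf.intervalIntegrable _ _)
      (hcont.intervalIntegrable _ _)
    intro x hx
    have hx1 : t'' ≤ x := le_trans hs hx.1
    rw [hfg x hx1]
    have hgx : g x ≤ g t := hg_inc hx1 ht' hx.2
    have hxnn : (0:ℝ) ≤ x ^ (p - 1) := Real.rpow_nonneg (by linarith [hx.1]) _
    exact mul_le_mul_of_nonneg_right hgx hxnn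
  have h2 : ∫ τ in s..t, g t * τ ^ (p - 1) = g t * ((t ^ p - s ^ p) / p) := by
    rw [intervalIntegral.integral_const_mul, integral_rpow (Or.inl (by linarith))]
    rw [show p - 1 + 1 = p by ring]
  have hI : (∫ τ in (0:ℝ)..t, f τ) - ∫ τ in (0:ℝ)..s, f τ = ∫ τ in s..t, f τ :=
    intervalIntegral.integral_interval_sub_left (hf.intervalIntegrable _ _)
      (hf.intervalIntegrable _ _)
  have e3 : (1 / p) * s * f s = (g s * s ^ p) / p := by
    rw [hfg s hs, ← hss]; ring
  have e4 : (1 / p) * t * f t = (g t * t ^ p) / p := by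
    rw [hfg t ht', ← hts]; ring
  have hps : g s * s ^ p ≤ g t * s ^ p := mul_le_mul_of_nonneg_right hgs hA
  have key : g t * ((t ^ p - s ^ p) / p) ≤ (g t * t ^ p) / p - (g s * s ^ p) / p := by
    have heq : g t * ((t ^ p - s ^ p) / p) = (g t * t ^ p - g t * s ^ p) / p := by ring
    rw [heq]
    have : (g t * t ^ p) / p - (g s * s ^ p) / p = (g t * t ^ p - g s * s ^ p) / p := by ring
    rw [this]
    apply div_le_div_of_nonneg_right ?_ hp0.le
    linarith
  rw [e3, e4]
  linarith

/-- Lemma 3.4, second part. If `g(t) = f(t)/(|t|^{p-2}t)` is nondecreasing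
on `[t″,∞)` and nonincreasing on `(−∞,−t″]`, then there is `C₅ > 0` with
`𝓕(s) ≤ 𝓕(t) + C₅` whenever `0 ≤ s ≤ t` or `t ≤ s ≤ 0`. -/
theorem f9_implies_almost_mono_F (p t'' : ℝ) (hp : 1 < p) (ht'' : 0 < t'')
    (f F 𝓕 g : ℝ → ℝ) (hf : Continuous f)
    (hF : ∀ t : ℝ, F t = ∫ τ in (0:ℝ)..t, f τ)
    (h𝓕 : ∀ t : ℝ, 𝓕 t = (1 / p) * t * f t - F t)
    (hg : ∀ t : ℝ, t ≠ 0 → g t = f t / (|t| ^ (p - 2) * t))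
    (hg_inc : MonotoneOn g (Set.Ici t''))
    (hg_dec : AntitoneOn g (Set.Iic (-t''))) :
    ∃ C₅ > (0:ℝ), ∀ s t : ℝ, (0 ≤ s ∧ s ≤ t) ∨ (t ≤ s ∧ s ≤ 0) →
      𝓕 s ≤ 𝓕 t + C₅ := by
  -- f expressed via g on the positive side
  have hfg_pos : ∀ τ : ℝ, t'' ≤ τ → f τ = g τ * τ ^ (p - 1) := by
    intro τ hτ
    have hτ0 : 0 < τ := lt_of_lt_of_le ht'' hτ
    have h := hg τ hτ0.ne'
    have hne : τ ^ (p - 2) * τ ≠ 0 :=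
      mul_ne_zero (Real.rpow_pos_of_pos hτ0 _).ne' hτ0.ne'
    have hpow : τ ^ (p - 2) * τ = τ ^ (p - 1) := by
      rw [← Real.rpow_add_one hτ0.ne' (p - 2)]
      congr 1; ring
    rw [abs_of_pos hτ0] at h
    rw [h, ← hpow, div_mul_cancel₀ _ hne]
  -- monotonicity of 𝓕 on [t'', ∞)
  have mono_pos : ∀ s t : ℝ, t'' ≤ s → s ≤ t → 𝓕 s ≤ 𝓕 t := by
    intro s t hs hst
    rw [h𝓕, h𝓕, hF, hF]
    exact aux_mono_F p t'' hp ht'' f g hf hfg_pos hg_inc hs hst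
  -- negative side via reflection
  set f1 : ℝ → ℝ := fun x => -f (-x) with hf1def
  set g1 : ℝ → ℝ := fun x => g (-x) with hg1def
  have hf1 : Continuous f1 := (hf.comp continuous_neg).neg
  have hfg1 : ∀ τ : ℝ, t'' ≤ τ → f1 τ = g1 τ * τ ^ (p - 1) := by
    intro τ hτ
    have hτ0 : 0 < τ := lt_of_lt_of_le ht'' hτ
    have h := hg (-τ) (by simpa using hτ0.ne')
    have hne : τ ^ (p - 2) ≠ 0 := (Real.rpow_pos_of_pos hτ0 _).ne'
    have hpow : τ ^ (p - 2) * τ = τ ^ (p - 1) := by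
      rw [← Real.rpow_add_one hτ0.ne' (p - 2)]
      congr 1; ring
    rw [abs_neg, abs_of_pos hτ0] at h
    show -f (-τ) = g (-τ) * τ ^ (p - 1)
    rw [h, ← hpow]
    field_simp
  have hg1_inc : MonotoneOn g1 (Set.Ici t'') := by
    intro a ha b hb hab
    have ha' : t'' ≤ a := ha
    have hb' : t'' ≤ b := hb
    exact hg_dec (show -b ∈ Set.Iic (-t'') by simp only [Set.mem_Iic]; linarith)
      (show -a ∈ Set.Iic (-t'') by simp only [Set.mem_Iic]; linarith) (by linarith)
  have key : ∀ u : ℝ, (1 / p) * (-u) * f1 (-u) - ∫ τ in (0:ℝ)..(-u), f1 τ = 𝓕 u := by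
    intro u
    have hI : ∫ τ in (0:ℝ)..(-u), f1 τ = -∫ τ in (0:ℝ)..(-u), f (-τ) := by
      simp [hf1def, intervalIntegral.integral_neg]
    have hcn : (∫ τ in (0:ℝ)..(-u), f (-τ)) = ∫ τ in u..(0:ℝ), f τ := by
      simpa only [neg_zero, neg_neg] using intervalIntegral.integral_comp_neg (a := (0:ℝ)) (b := -u) f
    rw [h𝓕, hF, hI, hcn, intervalIntegral.integral_symm]
    show (1 / p) * -u * f1 (-u) - - -(∫ τ in (0:ℝ)..u, f τ) = _
    have : f1 (-u) = -f u := by simp [hf1def]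
    rw [this]; ring
  have mono_neg : ∀ s t : ℝ, t ≤ s → s ≤ -t'' → 𝓕 s ≤ 𝓕 t := by
    intro s t hts hs
    have h1 := aux_mono_F p t'' hp ht'' f1 g1 hf1 hfg1 hg1_inc
      (s := -s) (t := -t) (by linarith) (by linarith)
    rw [← key s, ← key t]
    exact h1
  -- continuity of 𝓕
  have hFc : Continuous F := by
    have h1 : Continuous fun x : ℝ => ∫ τ in (0:ℝ)..x, f τ :=
      intervalIntegral.continuous_primitive (fun a b => hf.intervalIntegrable a b) 0
    have : F = fun x : ℝ => ∫ τ in (0:ℝ)..x, f τ := funext hF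
    rw [this]; exact h1
  have h𝓕c : Continuous 𝓕 := by
    have : 𝓕 = fun t : ℝ => (1 / p) * t * f t - F t := funext h𝓕
    rw [this]
    exact ((continuous_const.mul continuous_id).mul hf).sub hFc
  have hne : (Set.Icc (-t'') t'').Nonempty := Set.nonempty_Icc.mpr (by linarith)
  obtain ⟨xmax, hxmaxmem, hxmax⟩ :=
    isCompact_Icc.exists_isMaxOn hne h𝓕c.continuousOn
  obtain ⟨xmin, hxminmem, hxmin⟩ :=
    isCompact_Icc.exists_isMinOn hne h𝓕c.continuousOn
  have hmax := isMaxOn_iff.mp hxmax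
  have hmin := isMinOn_iff.mp hxmin
  refine ⟨𝓕 xmax - 𝓕 xmin + 1, by linarith [hmax xmin hxminmem], ?_⟩
  intro s t h
  have hC : (0:ℝ) < 𝓕 xmax - 𝓕 xmin + 1 := by linarith [hmax xmin hxminmem]
  rcases h with ⟨hs0, hst⟩ | ⟨hts, hs0⟩
  · by_cases hs : t'' ≤ s
    · have := mono_pos s t hs hst; linarith
    · push_neg at hs
      have h1 : 𝓕 s ≤ 𝓕 xmax := hmax s ⟨by linarith, hs.le⟩
      by_cases ht : t ≤ t''
      · have h2 : 𝓕 xmin ≤ 𝓕 t := hmin t ⟨by linarith, ht⟩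
        linarith
      · push_neg at ht
        have h2 : 𝓕 xmin ≤ 𝓕 t'' := hmin t'' ⟨by linarith, le_rfl⟩
        have h3 := mono_pos t'' t le_rfl ht.le
        linarith
  · by_cases hs : s ≤ -t''
    · have := mono_neg s t hts hs; linarith
    · push_neg at hs
      have h1 : 𝓕 s ≤ 𝓕 xmax := hmax s ⟨hs.le, by linarith⟩
      by_cases ht : -t'' ≤ t
      · have h2 : 𝓕 xmin ≤ 𝓕 t := hmin t ⟨ht, by linarith⟩
        linarith
      · push_neg at ht
        have h2 : 𝓕 xmin ≤ 𝓕 (-t'') := hmin (-t'') ⟨le_rfl, by linarith⟩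
        have h3 := mono_neg (-t'') t ht.le le_rfl
        linarith
end

section
/- Fix p > 1 and define f₀ : ℝ → ℝ by f₀(t) = |t|^{p−2}·t·log(1 + |t|^{p−1}), with primitive F₀(t) = ∫₀ᵗ f₀(τ) dτ and auxiliary function 𝓕₀(t) = (1/p)·t·f₀(t) − F₀(t). Then 𝓕₀ is nondecreasing on [0,∞); in particular, 𝓕₀(t′) ≤ 𝓕₀(t) whenever 0 < t′ ≤ t, so f₀ satisfies condition (f7) of the paper with constant α = 1. -/
open MeasureTheory

/-- For the model nonlinearity `f₀(t) = |t|^{p−2} t log(1 + |t|^{p−1})`,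
the auxiliary function `𝓕₀(t) = (1/p)·t·f₀(t) − F₀(t)` is nondecreasing on `[0,∞)`; in
particular `𝓕₀(t′) ≤ 𝓕₀(t)` whenever `0 < t′ ≤ t`, so condition (f7) holds with `α = 1`. -/
theorem model_nonlinearity_satisfies_f7 (p : ℝ) (hp : 1 < p)
    (f₀ F₀ 𝓕₀ : ℝ → ℝ)
    (hf₀ : ∀ t : ℝ, f₀ t = |t| ^ (p - 2) * t * Real.log (1 + |t| ^ (p - 1)))
    (hF₀ : ∀ t : ℝ, F₀ t = ∫ τ in (0:ℝ)..t, f₀ τ)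
    (h𝓕₀ : ∀ t : ℝ, 𝓕₀ t = (1 / p) * t * f₀ t - F₀ t) :
    MonotoneOn 𝓕₀ (Set.Ici (0:ℝ)) ∧
      ∀ t' t : ℝ, 0 < t' → t' ≤ t → 𝓕₀ t' ≤ 1 * 𝓕₀ t := by
  have hp0 : (0:ℝ) < p := by linarith
  -- the even version of f₀
  set g : ℝ → ℝ := fun t => |t| ^ (p-1) * Real.log (1 + |t| ^ (p-1)) with hg
  have habs : Continuous fun t : ℝ => |t| ^ (p-1) := by
    rw [continuous_iff_continuousAt]
    intro x
    exact (Real.continuousAt_rpow_const _ _ (Or.inr (by linarith))).comp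
      continuous_abs.continuousAt
  have hargpos : ∀ t : ℝ, (0:ℝ) < 1 + |t| ^ (p-1) := by
    intro t
    have : (0:ℝ) ≤ |t| ^ (p-1) := Real.rpow_nonneg (abs_nonneg t) _
    linarith
  have hgcont : Continuous g := by
    exact habs.mul ((continuous_const.add habs).log (fun t => (hargpos t).ne'))
  -- f₀ = g on [0,∞)
  have hfg : ∀ t : ℝ, 0 ≤ t → f₀ t = g t := by
    intro t ht
    rw [hf₀, hg]
    rcases eq_or_lt_of_le ht with h | h
    · simp [← h, Real.zero_rpow (by linarith : p - 1 ≠ 0)]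
    · simp only
      rw [abs_of_pos h]
      have : t ^ (p-2) * t = t ^ (p-1) := by
        rw [← Real.rpow_add_one h.ne' (p-2), show p-2+1 = p-1 by ring]
      rw [this]
  -- primitive of g
  set G : ℝ → ℝ := fun t => ∫ τ in (0:ℝ)..t, g τ with hG
  have hGderiv : ∀ t : ℝ, HasDerivAt G (g t) t := by
    intro t
    exact intervalIntegral.integral_hasDerivAt_right (hgcont.intervalIntegrable 0 t)
      hgcont.stronglyMeasurable.stronglyMeasurableAtFilter hgcont.continuousAt
  have hFG : ∀ t : ℝ, 0 ≤ t → F₀ t = G t := by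
    intro t ht
    rw [hF₀, hG]
    apply intervalIntegral.integral_congr
    intro τ hτ
    rw [Set.uIcc_of_le ht] at hτ
    exact hfg τ hτ.1
  set Φ : ℝ → ℝ := fun t => (1/p) * t * g t - G t with hΦ
  have hEqOn : ∀ t : ℝ, 0 ≤ t → 𝓕₀ t = Φ t := by
    intro t ht
    rw [h𝓕₀, hfg t ht, hFG t ht]
  -- derivative of Φ on (0,∞)
  have hΦderiv : ∀ t : ℝ, 0 < t →
      HasDerivAt Φ ((p-1)/p * t ^ (2*p-2) / (1 + t ^ (p-1))) t := by
    intro t ht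
    have hne : t ≠ 0 := ht.ne'
    have hpos : (0:ℝ) < 1 + t ^ (p-1) := by
      have : (0:ℝ) ≤ t ^ (p-1) := Real.rpow_nonneg ht.le _
      linarith
    have hu : HasDerivAt (fun s : ℝ => s ^ (p-1)) ((p-1) * t ^ (p-2)) t := by
      have h := Real.hasDerivAt_rpow_const (p := p-1) (x := t) (Or.inl hne)
      have : p - 1 - 1 = p - 2 := by ring
      rwa [this] at h
    have h1 : HasDerivAt (fun s : ℝ => 1 + s ^ (p-1)) ((p-1) * t ^ (p-2)) t := by
      simpa using hu
    have hL : HasDerivAt (fun s : ℝ => Real.log (1 + s ^ (p-1)))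
        ((1 + t ^ (p-1))⁻¹ * ((p-1) * t ^ (p-2))) t :=
      (h1.log hpos.ne').congr_deriv (by ring)
    have hphi : HasDerivAt (fun s : ℝ => s ^ (p-1) * Real.log (1 + s ^ (p-1)))
        ((p-1) * t ^ (p-2) * Real.log (1 + t ^ (p-1)) +
          t ^ (p-1) * ((1 + t ^ (p-1))⁻¹ * ((p-1) * t ^ (p-2)))) t := hu.mul hL
    have hid : HasDerivAt (fun s : ℝ => s) 1 t := hasDerivAt_id t
    have hmul : HasDerivAt (fun s : ℝ => s * (s ^ (p-1) * Real.log (1 + s ^ (p-1))))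
        (1 * (t ^ (p-1) * Real.log (1 + t ^ (p-1))) +
          t * ((p-1) * t ^ (p-2) * Real.log (1 + t ^ (p-1)) +
            t ^ (p-1) * ((1 + t ^ (p-1))⁻¹ * ((p-1) * t ^ (p-2))))) t := hid.mul hphi
    have hΨ : HasDerivAt
        (fun s : ℝ => (1/p) * (s * (s ^ (p-1) * Real.log (1 + s ^ (p-1)))) - G s)
        ((1/p) * (1 * (t ^ (p-1) * Real.log (1 + t ^ (p-1))) +
          t * ((p-1) * t ^ (p-2) * Real.log (1 + t ^ (p-1)) +
            t ^ (p-1) * ((1 + t ^ (p-1))⁻¹ * ((p-1) * t ^ (p-2))))) - g t) t :=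
      (hmul.const_mul (1/p)).sub (hGderiv t)
    have hEq : Φ =ᶠ[nhds t] fun s : ℝ =>
        (1/p) * (s * (s ^ (p-1) * Real.log (1 + s ^ (p-1)))) - G s := by
      filter_upwards [Ioi_mem_nhds ht] with s hs
      have hs0 : (0:ℝ) < s := hs
      rw [hΦ, hg]
      simp only [abs_of_pos hs0]
      ring
    have hD : (1/p) * (1 * (t ^ (p-1) * Real.log (1 + t ^ (p-1))) +
          t * ((p-1) * t ^ (p-2) * Real.log (1 + t ^ (p-1)) +
            t ^ (p-1) * ((1 + t ^ (p-1))⁻¹ * ((p-1) * t ^ (p-2))))) - g t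
        = (p-1)/p * t ^ (2*p-2) / (1 + t ^ (p-1)) := by
      have e1 : t ^ (p-1) = t ^ (p-2) * t := by
        rw [← Real.rpow_add_one hne (p-2), show p-2+1 = p-1 by ring]
      have e2 : t ^ (2*p-2) = t ^ (p-1) * t ^ (p-1) := by
        rw [← Real.rpow_add ht, show p-1+(p-1) = 2*p-2 by ring]
      rw [hg]
      simp only [abs_of_pos ht]
      rw [e2, e1]
      have hden : (1 : ℝ) + t ^ (p-2) * t ≠ 0 := by rw [← e1]; exact hpos.ne'
      field_simp
      ring
    rw [← hD]
    exact hΨ.congr_of_eventuallyEq hEq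
  -- monotonicity of Φ on [0,∞)
  have hGcont : Continuous G := by
    rw [continuous_iff_continuousAt]
    exact fun t => (hGderiv t).continuousAt
  have hΦcont : Continuous Φ := by
    exact ((continuous_const.mul continuous_id).mul hgcont).sub hGcont
  have hmono : MonotoneOn Φ (Set.Ici (0:ℝ)) := by
    apply monotoneOn_of_deriv_nonneg (convex_Ici 0) hΦcont.continuousOn
    · intro x hx
      rw [interior_Ici] at hx
      exact (hΦderiv x hx).differentiableAt.differentiableWithinAt
    · intro x hx
      rw [interior_Ici] at hx
      rw [(hΦderiv x hx).deriv]
      apply div_nonneg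
      · apply mul_nonneg
        · apply div_nonneg <;> linarith
        · exact Real.rpow_nonneg hx.le _
      · have : (0:ℝ) ≤ x ^ (p-1) := Real.rpow_nonneg hx.le _
        linarith
  have hmono' : MonotoneOn 𝓕₀ (Set.Ici (0:ℝ)) := by
    intro a ha b hb hab
    rw [hEqOn a ha, hEqOn b hb]
    exact hmono ha hb hab
  refine ⟨hmono', ?_⟩
  intro t' t h1 h2
  rw [one_mul]
  exact hmono' (le_of_lt h1) (h1.le.trans h2) h2
end

section
/- Let N ≥ 1, p ∈ (1,∞), and let ν be a finite Borel measure on the interval (0,1). Let (u_n) be a sequence of measurable functions u_n : ℝ^N → ℝ and u : ℝ^N → ℝ a measurable function such that u_n → u almost everywhere in ℝ^N and sup_n ∫_{(0,1)} J_{s,p}(u_n) dν(s) < ∞. Then ∫_{(0,1)} J_{s,p}(u) dν(s) = lim_{n→∞} ( ∫_{(0,1)} J_{s,p}(u_n) dν(s) − ∫_{(0,1)} J_{s,p}(u_n − u) dν(s) ). -/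
open MeasureTheory ENNReal Filter

/-- The `p`-th power Gagliardo energy
`J_{s,p}(u) = ∬ |u(x) − u(y)|^p / |x − y|^{N+sp} dx dy`, valued in `[0,∞]`. -/
noncomputable def gagliardoEnergy (N : ℕ) (s p : ℝ)
    (u : EuclideanSpace ℝ (Fin N) → ℝ) : ℝ≥0∞ :=
  ∫⁻ x, ∫⁻ y, ENNReal.ofReal (|u x - u y| ^ p) /
    ENNReal.ofReal (dist x y ^ ((N : ℝ) + s * p))

lemma rpow_sub_rpow_le {x y p : ℝ} (hy : 0 ≤ y) (hyx : y ≤ x) (hp : 1 ≤ p) :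
    x ^ p - y ^ p ≤ p * x ^ (p - 1) * (x - y) := by
  rcases eq_or_lt_of_le (hy.trans hyx) with hx | hx
  · have hx0 : x = 0 := hx.symm
    have hy0 : y = 0 := le_antisymm (hx0 ▸ hyx) hy
    simp [hx0, hy0, Real.zero_rpow (by linarith : p ≠ 0)]
  · set t := y / x with ht
    have ht0 : 0 ≤ t := div_nonneg hy hx.le
    have hber : 1 + p * (t - 1) ≤ t ^ p := by
      have := one_add_mul_self_le_rpow_one_add (s := t - 1) (by linarith) hp
      simpa using this
    have hxp : (0:ℝ) < x ^ p := Real.rpow_pos_of_pos hx p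
    have hmul : x ^ p * (1 + p * (t - 1)) ≤ x ^ p * t ^ p :=
      mul_le_mul_of_nonneg_left hber hxp.le
    have hxt : x ^ p * t ^ p = y ^ p := by
      rw [← Real.mul_rpow hx.le ht0, mul_div_cancel₀ _ hx.ne']
    have hsplit : x ^ p = x ^ (p - 1) * x := by
      rw [← Real.rpow_add_one hx.ne' (p - 1)]; ring_nf
    have hxpt : x ^ p * (t - 1) = x ^ (p - 1) * (y - x) := by
      rw [hsplit, ht]; field_simp
    nlinarith [hmul, hxt, hxpt]

lemma abs_rpow_sub_abs_rpow_le {p : ℝ} (hp : 1 ≤ p) (x y : ℝ) (hx : 0 ≤ x) (hy : 0 ≤ y) :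
    |x ^ p - y ^ p| ≤ p * (max x y) ^ (p - 1) * |x - y| := by
  have hp0 : (0:ℝ) ≤ p := by linarith
  rcases le_total y x with h | h
  · rw [abs_of_nonneg (sub_nonneg.2 (Real.rpow_le_rpow hy h hp0)), max_eq_left h,
      abs_of_nonneg (by linarith)]
    exact rpow_sub_rpow_le hy h hp
  · rw [abs_sub_comm, abs_of_nonneg (sub_nonneg.2 (Real.rpow_le_rpow hx h hp0)),
      max_eq_right h, abs_sub_comm, abs_of_nonneg (by linarith)]
    exact rpow_sub_rpow_le hx h hp

lemma rpow_pred_mul_self {x p : ℝ} (hx : 0 ≤ x) (hp : 1 < p) :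
    x ^ (p - 1) * x = x ^ p := by
  rcases eq_or_lt_of_le hx with h | h
  · simp [← h, Real.zero_rpow (by linarith : p ≠ 0),
      Real.zero_rpow (sub_ne_zero.mpr (by linarith : p ≠ 1))]
  · rw [← Real.rpow_add_one h.ne' (p - 1)]; ring_nf

lemma young_case {p δ : ℝ} (hp : 1 < p) (hδ : 0 < δ) {a b : ℝ} (ha : 0 ≤ a) (hb : 0 ≤ b) :
    a ^ (p - 1) * b ≤ δ * a ^ p + δ ^ (1 - p) * b ^ p := by
  have hp1 : (0:ℝ) ≤ p - 1 := by linarith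
  have hbp : 0 ≤ δ ^ (1 - p) * b ^ p :=
    mul_nonneg (Real.rpow_nonneg hδ.le _) (Real.rpow_nonneg hb _)
  have hap : 0 ≤ δ * a ^ p := mul_nonneg hδ.le (Real.rpow_nonneg ha _)
  rcases le_or_gt b (δ * a) with h | h
  · have : a ^ (p - 1) * b ≤ a ^ (p - 1) * (δ * a) :=
      mul_le_mul_of_nonneg_left h (Real.rpow_nonneg ha _)
    have h2 : a ^ (p - 1) * (δ * a) = δ * a ^ p := by
      rw [show a ^ (p - 1) * (δ * a) = δ * (a ^ (p - 1) * a) by ring,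
        rpow_pred_mul_self ha hp]
    linarith
  · have hb0 : 0 < b := lt_of_le_of_lt (mul_nonneg hδ.le ha) h
    have hab : a ≤ b / δ := by rw [le_div_iff₀ hδ]; nlinarith
    have h1 : a ^ (p - 1) ≤ (b / δ) ^ (p - 1) := Real.rpow_le_rpow ha hab hp1
    have h2 : (b / δ) ^ (p - 1) = b ^ (p - 1) / δ ^ (p - 1) :=
      Real.div_rpow hb hδ.le _
    have h3 : a ^ (p - 1) * b ≤ b ^ (p - 1) / δ ^ (p - 1) * b := by
      apply mul_le_mul_of_nonneg_right _ hb0.le; rw [← h2]; exact h1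
    have h4 : b ^ (p - 1) / δ ^ (p - 1) * b = δ ^ (1 - p) * b ^ p := by
      rw [div_mul_eq_mul_div, rpow_pred_mul_self hb0.le hp,
        show (1 - p) = -(p - 1) by ring, Real.rpow_neg hδ.le]
      ring
    linarith [h3, h4.le, hap]

lemma key_ineq {p : ℝ} (hp : 1 < p) {ε : ℝ} (hε : 0 < ε) :
    ∃ C : ℝ, 0 ≤ C ∧ ∀ a b : ℝ,
      abs (|a + b| ^ p - |a| ^ p - |b| ^ p) ≤ ε * |a| ^ p + C * |b| ^ p := by
  have hp1 : (0:ℝ) ≤ p - 1 := by linarith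
  set K : ℝ := p * 2 ^ (p - 1) with hK
  have hKpos : 0 < K := mul_pos (by linarith) (Real.rpow_pos_of_pos two_pos _)
  set δ : ℝ := ε / K with hδdef
  have hδ : 0 < δ := div_pos hε hKpos
  refine ⟨K * (δ ^ (1 - p) + 1) + 1, by positivity, fun a b => ?_⟩
  rcases eq_or_ne b 0 with rfl | hb0
  · simp [Real.zero_rpow (by linarith : p ≠ 0)]
    positivity
  have habs : (0:ℝ) ≤ |a| := abs_nonneg a
  have hbabs : (0:ℝ) < |b| := abs_pos.2 hb0
  -- step 1
  have step1 : abs (|a + b| ^ p - |a| ^ p) ≤ p * (|a| + |b|) ^ (p - 1) * |b| := by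
    have h1 := abs_rpow_sub_abs_rpow_le hp.le |a + b| |a| (abs_nonneg _) habs
    have h2 : max |a + b| |a| ≤ |a| + |b| :=
      max_le ((abs_add_le a b).trans_eq rfl) (by linarith [abs_nonneg b])
    have h3 : abs (|a + b| - |a|) ≤ |b| := by
      have := abs_abs_sub_abs_le_abs_sub (a + b) a
      simpa using this
    calc abs (|a + b| ^ p - |a| ^ p)
        ≤ p * (max |a + b| |a|) ^ (p - 1) * abs (|a + b| - |a|) := h1
      _ ≤ p * (|a| + |b|) ^ (p - 1) * |b| := by
          apply mul_le_mul
          · exact mul_le_mul_of_nonneg_left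
              (Real.rpow_le_rpow (le_max_right _ _|>.trans' (abs_nonneg _)) h2 hp1)
              (by linarith)
          · exact h3
          · exact abs_nonneg _
          · positivity
  -- step 2
  have step2 : (|a| + |b|) ^ (p - 1) ≤ 2 ^ (p - 1) * (|a| ^ (p - 1) + |b| ^ (p - 1)) := by
    have h1 : |a| + |b| ≤ 2 * max |a| |b| := by
      rcases le_total |a| |b| with h | h
      · rw [max_eq_right h]; linarith
      · rw [max_eq_left h]; linarith
    have h2 : (|a| + |b|) ^ (p - 1) ≤ (2 * max |a| |b|) ^ (p - 1) :=
      Real.rpow_le_rpow (by positivity) h1 hp1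
    have h3 : (2 * max |a| |b|) ^ (p - 1) = 2 ^ (p - 1) * (max |a| |b|) ^ (p - 1) :=
      Real.mul_rpow (by norm_num) (le_max_of_le_left habs)
    have h4 : (max |a| |b|) ^ (p - 1) ≤ |a| ^ (p - 1) + |b| ^ (p - 1) := by
      rcases max_cases |a| |b| with ⟨h, _⟩ | ⟨h, _⟩ <;> rw [h]
      · nlinarith [Real.rpow_nonneg (abs_nonneg b) (p - 1)]
      · nlinarith [Real.rpow_nonneg (abs_nonneg a) (p - 1)]
    calc (|a| + |b|) ^ (p - 1) ≤ 2 ^ (p - 1) * (max |a| |b|) ^ (p - 1) := h2.trans_eq h3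
      _ ≤ 2 ^ (p - 1) * (|a| ^ (p - 1) + |b| ^ (p - 1)) :=
          mul_le_mul_of_nonneg_left h4 (by positivity)
  -- combine
  have hyoung : |a| ^ (p - 1) * |b| ≤ δ * |a| ^ p + δ ^ (1 - p) * |b| ^ p :=
    young_case hp hδ habs hbabs.le
  have hbb : |b| ^ (p - 1) * |b| = |b| ^ p := rpow_pred_mul_self hbabs.le hp
  have step3 : abs (|a + b| ^ p - |a| ^ p) ≤ K * (|a| ^ (p - 1) * |b| + |b| ^ p) := by
    calc abs (|a + b| ^ p - |a| ^ p) ≤ p * (|a| + |b|) ^ (p - 1) * |b| := step1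
      _ ≤ p * (2 ^ (p - 1) * (|a| ^ (p - 1) + |b| ^ (p - 1))) * |b| := by
          apply mul_le_mul_of_nonneg_right _ hbabs.le
          exact mul_le_mul_of_nonneg_left step2 (by linarith)
      _ = K * (|a| ^ (p - 1) * |b| + |b| ^ (p - 1) * |b|) := by rw [hK]; ring
      _ = K * (|a| ^ (p - 1) * |b| + |b| ^ p) := by rw [hbb]
  have hKδ : K * δ = ε := by rw [hδdef]; field_simp
  have habsp : (0:ℝ) ≤ |b| ^ p := Real.rpow_nonneg hbabs.le _
  have htri : abs (|a + b| ^ p - |a| ^ p - |b| ^ p) ≤ abs (|a + b| ^ p - |a| ^ p) + |b| ^ p := by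
    calc abs (|a + b| ^ p - |a| ^ p - |b| ^ p)
        ≤ abs (|a + b| ^ p - |a| ^ p) + abs (|b| ^ p) := abs_sub _ _
    _ = abs (|a + b| ^ p - |a| ^ p) + |b| ^ p := by rw [abs_of_nonneg habsp]
  have h6 := mul_le_mul_of_nonneg_left hyoung hKpos.le
  rw [← hKδ]
  nlinarith [htri, step3, h6]

lemma abs_sub_rpow_le {p : ℝ} (hp : 0 ≤ p) (x y : ℝ) :
    |x - y| ^ p ≤ 2 ^ p * (|x| ^ p + |y| ^ p) := by
  have h1 : |x - y| ≤ 2 * max |x| |y| := by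
    rcases le_total |x| |y| with h | h
    · rw [max_eq_right h]; have := abs_sub x y; linarith [abs_sub_abs_le_abs_sub x y, abs_sub x y]
    · rw [max_eq_left h]; linarith [abs_sub x y]
  have h2 : |x - y| ^ p ≤ (2 * max |x| |y|) ^ p :=
    Real.rpow_le_rpow (abs_nonneg _) h1 hp
  have h3 : (2 * max |x| |y|) ^ p = 2 ^ p * (max |x| |y|) ^ p :=
    Real.mul_rpow (by norm_num) (le_max_of_le_left (abs_nonneg _))
  have h4 : (max |x| |y|) ^ p ≤ |x| ^ p + |y| ^ p := by
    rcases max_cases |x| |y| with ⟨h, _⟩ | ⟨h, _⟩ <;> rw [h]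
    · nlinarith [Real.rpow_nonneg (abs_nonneg y) p]
    · nlinarith [Real.rpow_nonneg (abs_nonneg x) p]
  calc |x - y| ^ p ≤ 2 ^ p * (max |x| |y|) ^ p := h2.trans_eq h3
    _ ≤ 2 ^ p * (|x| ^ p + |y| ^ p) :=
        mul_le_mul_of_nonneg_left h4 (Real.rpow_nonneg (by norm_num) p)

lemma brezis_lieb_general {Ω : Type*} [MeasurableSpace Ω] (μ : Measure Ω) {p : ℝ} (hp : 1 < p)
    (f : ℕ → Ω → ℝ) (g : Ω → ℝ) (hf : ∀ n, Measurable (f n)) (hg : Measurable g)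
    (hae : ∀ᵐ ω ∂μ, Tendsto (fun n => f n ω) atTop (nhds (g ω)))
    (hbdd : (⨆ n, ∫⁻ ω, ENNReal.ofReal (|f n ω| ^ p) ∂μ) < ⊤) :
    Tendsto (fun n => (∫⁻ ω, ENNReal.ofReal (|f n ω| ^ p) ∂μ).toReal -
      (∫⁻ ω, ENNReal.ofReal (|f n ω - g ω| ^ p) ∂μ).toReal) atTop
      (nhds (∫⁻ ω, ENNReal.ofReal (|g ω| ^ p) ∂μ).toReal) := by
  have hp0 : (0:ℝ) < p := by linarith
  -- measurability of basic ingredients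
  have hmA : ∀ n, Measurable fun ω => ENNReal.ofReal (|f n ω| ^ p) := fun n =>
    ((hf n).abs.pow measurable_const).ennreal_ofReal
  have hmB : ∀ n, Measurable fun ω => ENNReal.ofReal (|f n ω - g ω| ^ p) := fun n =>
    (((hf n).sub hg).abs.pow measurable_const).ennreal_ofReal
  have hmC : Measurable fun ω => ENNReal.ofReal (|g ω| ^ p) :=
    (hg.abs.pow measurable_const).ennreal_ofReal
  set A : ℕ → ℝ≥0∞ := fun n => ∫⁻ ω, ENNReal.ofReal (|f n ω| ^ p) ∂μ with hAdef
  set B : ℕ → ℝ≥0∞ := fun n => ∫⁻ ω, ENNReal.ofReal (|f n ω - g ω| ^ p) ∂μ with hBdef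
  set C : ℝ≥0∞ := ∫⁻ ω, ENNReal.ofReal (|g ω| ^ p) ∂μ with hCdef
  set M : ℝ≥0∞ := ⨆ n, A n with hMdef
  have hAM : ∀ n, A n ≤ M := fun n => le_iSup A n
  have hAfin : ∀ n, A n ≠ ⊤ := fun n => ((hAM n).trans_lt hbdd).ne
  -- pointwise ENNReal convergence
  have haeE : ∀ᵐ ω ∂μ, Tendsto (fun n => ENNReal.ofReal (|f n ω| ^ p)) atTop
      (nhds (ENNReal.ofReal (|g ω| ^ p))) := by
    filter_upwards [hae] with ω hω
    exact (ENNReal.continuous_ofReal.tendsto _).comp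
      (((Real.continuousAt_rpow_const _ p (Or.inr hp0.le)).tendsto).comp hω.abs)
  -- C ≤ M via Fatou
  have hCM : C ≤ M := by
    have h1 : C = ∫⁻ ω, liminf (fun n => ENNReal.ofReal (|f n ω| ^ p)) atTop ∂μ := by
      refine lintegral_congr_ae ?_
      filter_upwards [haeE] with ω hω
      exact hω.liminf_eq.symm
    calc C = _ := h1
      _ ≤ liminf A atTop := lintegral_liminf_le hmA
      _ ≤ M := liminf_le_of_frequently_le (Frequently.of_forall fun n => hAM n)
  have hCfin : C ≠ ⊤ := (hCM.trans_lt hbdd).ne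
  -- uniform bound on B
  have hBbound : ∀ n, B n ≤ ENNReal.ofReal (2 ^ p) * (A n + C) := by
    intro n
    have hpt : ∀ ω, ENNReal.ofReal (|f n ω - g ω| ^ p) ≤
        ENNReal.ofReal (2 ^ p) * (ENNReal.ofReal (|f n ω| ^ p) + ENNReal.ofReal (|g ω| ^ p)) := by
      intro ω
      calc ENNReal.ofReal (|f n ω - g ω| ^ p)
          ≤ ENNReal.ofReal (2 ^ p * (|f n ω| ^ p + |g ω| ^ p)) :=
            ENNReal.ofReal_le_ofReal (abs_sub_rpow_le hp0.le _ _)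
        _ = ENNReal.ofReal (2 ^ p) * (ENNReal.ofReal (|f n ω| ^ p) + ENNReal.ofReal (|g ω| ^ p)) := by
            rw [ENNReal.ofReal_mul (Real.rpow_nonneg (by norm_num) p),
              ENNReal.ofReal_add (Real.rpow_nonneg (abs_nonneg _) p)
                (Real.rpow_nonneg (abs_nonneg _) p)]
    calc B n ≤ ∫⁻ ω, ENNReal.ofReal (2 ^ p) *
          (ENNReal.ofReal (|f n ω| ^ p) + ENNReal.ofReal (|g ω| ^ p)) ∂μ :=
        lintegral_mono hpt
      _ = ENNReal.ofReal (2 ^ p) * (A n + C) := by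
          rw [lintegral_const_mul (f := fun ω => ENNReal.ofReal (|f n ω| ^ p) + ENNReal.ofReal (|g ω| ^ p)) _ ((hmA n).add hmC), lintegral_add_left (hmA n)]
  set K : ℝ≥0∞ := ENNReal.ofReal (2 ^ p) * (M + C) with hKdef
  have hKfin : K ≠ ⊤ :=
    ENNReal.mul_ne_top ENNReal.ofReal_ne_top (ENNReal.add_ne_top.2 ⟨hbdd.ne, hCfin⟩)
  have hBK : ∀ n, B n ≤ K := fun n => (hBbound n).trans
    (mul_le_mul_right (add_le_add (hAM n) le_rfl) _)
  have hBfin : ∀ n, B n ≠ ⊤ := fun n => ((hBK n).trans_lt hKfin.lt_top).ne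
  -- the defect integral D
  set D : ℕ → ℝ≥0∞ := fun n =>
    ∫⁻ ω, ENNReal.ofReal (|(|f n ω| ^ p - |f n ω - g ω| ^ p - |g ω| ^ p)|) ∂μ with hDdef
  have hmD : ∀ n, Measurable fun ω =>
      ENNReal.ofReal (|(|f n ω| ^ p - |f n ω - g ω| ^ p - |g ω| ^ p)|) := fun n =>
    ((((hf n).abs.pow measurable_const).sub
      (((hf n).sub hg).abs.pow measurable_const)).sub
      (hg.abs.pow measurable_const)).abs.ennreal_ofReal
  -- D tends to 0
  have hD0 : Tendsto D atTop (nhds 0) := by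
    have hlimsup : ∀ ε : ℝ, 0 < ε → limsup D atTop ≤ ENNReal.ofReal ε * K := by
      intro ε hε
      obtain ⟨Cε, hCε0, hCε⟩ := key_ineq hp hε
      set W : ℕ → Ω → ℝ := fun n ω =>
        max (|(|f n ω| ^ p - |f n ω - g ω| ^ p - |g ω| ^ p)| - ε * |f n ω - g ω| ^ p) 0 with hWdef
      have hWkey : ∀ n ω, |(|f n ω| ^ p - |f n ω - g ω| ^ p - |g ω| ^ p)| ≤
          ε * |f n ω - g ω| ^ p + Cε * |g ω| ^ p := by
        intro n ω
        have := hCε (f n ω - g ω) (g ω)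
        simpa using this
      have hWle : ∀ n ω, W n ω ≤ Cε * |g ω| ^ p := by
        intro n ω
        apply max_le _ (mul_nonneg hCε0 (Real.rpow_nonneg (abs_nonneg _) p))
        linarith [hWkey n ω]
      have hWmeas : ∀ n, Measurable fun ω => ENNReal.ofReal (W n ω) := by
        intro n
        apply Measurable.ennreal_ofReal
        exact (((((hf n).abs.pow measurable_const).sub
          (((hf n).sub hg).abs.pow measurable_const)).sub
          (hg.abs.pow measurable_const)).abs.sub
          ((((hf n).sub hg).abs.pow measurable_const).const_mul ε)).max measurable_const
      have hWtendsto : ∀ᵐ ω ∂μ, Tendsto (fun n => ENNReal.ofReal (W n ω)) atTop (nhds 0) := by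
        filter_upwards [hae] with ω hω
        have h1 : Tendsto (fun n => |f n ω - g ω| ^ p) atTop (nhds 0) := by
          have h0 : Tendsto (fun n => |f n ω - g ω|) atTop (nhds 0) := by
            have hc : Tendsto (fun n : ℕ => f n ω - g ω) atTop (nhds (g ω - g ω)) :=
              hω.sub (tendsto_const_nhds : Tendsto (fun _ : ℕ => g ω) atTop (nhds (g ω)))
            have := hc.abs
            simpa using this
          have := ((Real.continuousAt_rpow_const 0 p (Or.inr hp0.le)).tendsto).comp h0
          simpa [Real.zero_rpow hp0.ne', Function.comp_def] using this
        have h2 : Tendsto (fun n => |f n ω| ^ p) atTop (nhds (|g ω| ^ p)) :=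
          ((Real.continuousAt_rpow_const _ p (Or.inr hp0.le)).tendsto).comp hω.abs
        have h3 : Tendsto (fun n => W n ω) atTop (nhds 0) := by
          have h4 : Tendsto (fun n =>
              |(|f n ω| ^ p - |f n ω - g ω| ^ p - |g ω| ^ p)| - ε * |f n ω - g ω| ^ p)
              atTop (nhds 0) := by
            have hc : Tendsto (fun n : ℕ => |f n ω| ^ p - |f n ω - g ω| ^ p - |g ω| ^ p)
                atTop (nhds (|g ω| ^ p - 0 - |g ω| ^ p)) :=
              (h2.sub h1).sub (tendsto_const_nhds :
                Tendsto (fun _ : ℕ => |g ω| ^ p) atTop (nhds (|g ω| ^ p)))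
            have := hc.abs.sub (h1.const_mul ε)
            simpa using this
          have := h4.max (tendsto_const_nhds : Tendsto (fun _ : ℕ => (0:ℝ)) atTop (nhds 0))
          simpa using this
        have := (ENNReal.continuous_ofReal.tendsto _).comp h3
        simpa [Function.comp_def] using this
      have hWD : Tendsto (fun n => ∫⁻ ω, ENNReal.ofReal (W n ω) ∂μ) atTop (nhds 0) := by
        have h := tendsto_lintegral_of_dominated_convergence
          (bound := fun ω => ENNReal.ofReal (Cε * |g ω| ^ p)) hWmeas
          (fun n => Eventually.of_forall fun ω => ENNReal.ofReal_le_ofReal (hWle n ω))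
          (by
            rw [show (fun ω => ENNReal.ofReal (Cε * |g ω| ^ p)) =
                fun ω => ENNReal.ofReal Cε * ENNReal.ofReal (|g ω| ^ p) by
              funext ω; rw [ENNReal.ofReal_mul hCε0]
            ]
            rw [lintegral_const_mul _ hmC]
            exact ENNReal.mul_ne_top ENNReal.ofReal_ne_top hCfin)
          hWtendsto
        simpa using h
      have hDle : ∀ n, D n ≤ (∫⁻ ω, ENNReal.ofReal (W n ω) ∂μ) + ENNReal.ofReal ε * B n := by
        intro n
        have hpt : ∀ ω, ENNReal.ofReal (|(|f n ω| ^ p - |f n ω - g ω| ^ p - |g ω| ^ p)|) ≤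
            ENNReal.ofReal (W n ω) + ENNReal.ofReal ε * ENNReal.ofReal (|f n ω - g ω| ^ p) := by
          intro ω
          have h1 : |(|f n ω| ^ p - |f n ω - g ω| ^ p - |g ω| ^ p)| ≤
              W n ω + ε * |f n ω - g ω| ^ p := by
            have := le_max_left (|(|f n ω| ^ p - |f n ω - g ω| ^ p - |g ω| ^ p)| -
              ε * |f n ω - g ω| ^ p) 0
            simp only [hWdef]; linarith
          calc ENNReal.ofReal (|(|f n ω| ^ p - |f n ω - g ω| ^ p - |g ω| ^ p)|)
              ≤ ENNReal.ofReal (W n ω + ε * |f n ω - g ω| ^ p) := ENNReal.ofReal_le_ofReal h1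
            _ = ENNReal.ofReal (W n ω) + ENNReal.ofReal ε * ENNReal.ofReal (|f n ω - g ω| ^ p) := by
                rw [ENNReal.ofReal_add (le_max_right _ _)
                  (mul_nonneg hε.le (Real.rpow_nonneg (abs_nonneg _) p)),
                  ENNReal.ofReal_mul hε.le]
        calc D n ≤ ∫⁻ ω, (ENNReal.ofReal (W n ω) +
              ENNReal.ofReal ε * ENNReal.ofReal (|f n ω - g ω| ^ p)) ∂μ := lintegral_mono hpt
          _ = (∫⁻ ω, ENNReal.ofReal (W n ω) ∂μ) + ENNReal.ofReal ε * B n := by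
              rw [lintegral_add_left (hWmeas n), lintegral_const_mul _ (hmB n)]
      calc limsup D atTop
          ≤ limsup (fun n => (∫⁻ ω, ENNReal.ofReal (W n ω) ∂μ) + ENNReal.ofReal ε * K) atTop :=
            limsup_le_limsup (Eventually.of_forall fun n => (hDle n).trans
              (add_le_add_right (mul_le_mul_right (hBK n) _) _))
        _ = 0 + ENNReal.ofReal ε * K := by
            apply Tendsto.limsup_eq
            exact hWD.add tendsto_const_nhds
        _ = ENNReal.ofReal ε * K := by rw [zero_add]
    have hlimsup0 : limsup D atTop = 0 := by
      refine le_antisymm ?_ (zero_le)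
      have htend : Tendsto (fun ε : ℝ => ENNReal.ofReal ε * K) (nhdsWithin 0 (Set.Ioi 0))
          (nhds 0) := by
        have h1 : Tendsto (fun ε : ℝ => ENNReal.ofReal ε) (nhdsWithin 0 (Set.Ioi 0))
            (nhds 0) := by
          have h0 : Tendsto (fun ε : ℝ => ENNReal.ofReal ε) (nhds 0)
              (nhds (ENNReal.ofReal 0)) := ENNReal.continuous_ofReal.tendsto 0
          simpa using h0.mono_left nhdsWithin_le_nhds
        have := ENNReal.Tendsto.mul_const h1 (Or.inr hKfin)
        simpa using this
      exact ge_of_tendsto htend (eventually_nhdsWithin_of_forall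
        fun ε (hε : ε ∈ Set.Ioi 0) => hlimsup ε hε)
    have hliminf0 : liminf D atTop = 0 :=
      le_antisymm (hlimsup0 ▸ liminf_le_limsup) (zero_le)
    exact tendsto_of_liminf_eq_limsup hliminf0 hlimsup0
  -- finiteness of D
  have hDfin : ∀ n, D n ≠ ⊤ := by
    intro n
    have hpt : ∀ ω, ENNReal.ofReal (|(|f n ω| ^ p - |f n ω - g ω| ^ p - |g ω| ^ p)|) ≤
        ENNReal.ofReal (|f n ω| ^ p) + (ENNReal.ofReal (|f n ω - g ω| ^ p) +
          ENNReal.ofReal (|g ω| ^ p)) := by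
      intro ω
      have h1 : |(|f n ω| ^ p - |f n ω - g ω| ^ p - |g ω| ^ p)| ≤
          |f n ω| ^ p + (|f n ω - g ω| ^ p + |g ω| ^ p) := by
        have n1 := Real.rpow_nonneg (abs_nonneg (f n ω)) p
        have n2 := Real.rpow_nonneg (abs_nonneg (f n ω - g ω)) p
        have n3 := Real.rpow_nonneg (abs_nonneg (g ω)) p
        rw [abs_le]; constructor <;> linarith
      calc ENNReal.ofReal (|(|f n ω| ^ p - |f n ω - g ω| ^ p - |g ω| ^ p)|)
          ≤ ENNReal.ofReal (|f n ω| ^ p + (|f n ω - g ω| ^ p + |g ω| ^ p)) :=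
            ENNReal.ofReal_le_ofReal h1
        _ = _ := by
            rw [ENNReal.ofReal_add (Real.rpow_nonneg (abs_nonneg _) p)
              (add_nonneg (Real.rpow_nonneg (abs_nonneg _) p)
                (Real.rpow_nonneg (abs_nonneg _) p)),
              ENNReal.ofReal_add (Real.rpow_nonneg (abs_nonneg _) p)
                (Real.rpow_nonneg (abs_nonneg _) p)]
    have : D n ≤ A n + (B n + C) := by
      calc D n ≤ ∫⁻ ω, (ENNReal.ofReal (|f n ω| ^ p) + (ENNReal.ofReal (|f n ω - g ω| ^ p) +
            ENNReal.ofReal (|g ω| ^ p))) ∂μ := lintegral_mono hpt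
        _ = A n + (B n + C) := by
            rw [lintegral_add_left (hmA n), lintegral_add_left (hmB n)]
    exact (this.trans_lt (by
      refine ENNReal.add_lt_top.2 ⟨(hAfin n).lt_top, ENNReal.add_lt_top.2
        ⟨(hBfin n).lt_top, hCfin.lt_top⟩⟩)).ne
  -- key two-sided inequalities
  have h1 : ∀ n, A n ≤ B n + C + D n := by
    intro n
    have hpt : ∀ ω, ENNReal.ofReal (|f n ω| ^ p) ≤
        ENNReal.ofReal (|f n ω - g ω| ^ p) + ENNReal.ofReal (|g ω| ^ p) +
          ENNReal.ofReal (|(|f n ω| ^ p - |f n ω - g ω| ^ p - |g ω| ^ p)|) := by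
      intro ω
      have hr : |f n ω| ^ p ≤ |f n ω - g ω| ^ p + |g ω| ^ p +
          |(|f n ω| ^ p - |f n ω - g ω| ^ p - |g ω| ^ p)| := by
        linarith [le_abs_self (|f n ω| ^ p - |f n ω - g ω| ^ p - |g ω| ^ p)]
      calc ENNReal.ofReal (|f n ω| ^ p) ≤ ENNReal.ofReal (|f n ω - g ω| ^ p + |g ω| ^ p +
          |(|f n ω| ^ p - |f n ω - g ω| ^ p - |g ω| ^ p)|) := ENNReal.ofReal_le_ofReal hr
        _ = _ := by
            rw [ENNReal.ofReal_add (add_nonneg (Real.rpow_nonneg (abs_nonneg _) p)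
                (Real.rpow_nonneg (abs_nonneg _) p)) (abs_nonneg _),
              ENNReal.ofReal_add (Real.rpow_nonneg (abs_nonneg _) p)
                (Real.rpow_nonneg (abs_nonneg _) p)]
    calc A n ≤ ∫⁻ ω, (ENNReal.ofReal (|f n ω - g ω| ^ p) + ENNReal.ofReal (|g ω| ^ p) +
          ENNReal.ofReal (|(|f n ω| ^ p - |f n ω - g ω| ^ p - |g ω| ^ p)|)) ∂μ :=
        lintegral_mono hpt
      _ = B n + C + D n := by
          rw [lintegral_add_left (f := fun ω => ENNReal.ofReal (|f n ω - g ω| ^ p) + ENNReal.ofReal (|g ω| ^ p)) ((hmB n).add hmC), lintegral_add_left (hmB n)]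
  have h2 : ∀ n, B n + C ≤ A n + D n := by
    intro n
    have hpt : ∀ ω, ENNReal.ofReal (|f n ω - g ω| ^ p) + ENNReal.ofReal (|g ω| ^ p) ≤
        ENNReal.ofReal (|f n ω| ^ p) +
          ENNReal.ofReal (|(|f n ω| ^ p - |f n ω - g ω| ^ p - |g ω| ^ p)|) := by
      intro ω
      have hr : |f n ω - g ω| ^ p + |g ω| ^ p ≤ |f n ω| ^ p +
          |(|f n ω| ^ p - |f n ω - g ω| ^ p - |g ω| ^ p)| := by
        linarith [neg_abs_le (|f n ω| ^ p - |f n ω - g ω| ^ p - |g ω| ^ p)]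
      calc ENNReal.ofReal (|f n ω - g ω| ^ p) + ENNReal.ofReal (|g ω| ^ p)
          = ENNReal.ofReal (|f n ω - g ω| ^ p + |g ω| ^ p) := by
            rw [ENNReal.ofReal_add (Real.rpow_nonneg (abs_nonneg _) p)
              (Real.rpow_nonneg (abs_nonneg _) p)]
        _ ≤ ENNReal.ofReal (|f n ω| ^ p +
            |(|f n ω| ^ p - |f n ω - g ω| ^ p - |g ω| ^ p)|) := ENNReal.ofReal_le_ofReal hr
        _ = _ := by
            rw [ENNReal.ofReal_add (Real.rpow_nonneg (abs_nonneg _) p) (abs_nonneg _)]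
    calc B n + C = ∫⁻ ω, (ENNReal.ofReal (|f n ω - g ω| ^ p) +
          ENNReal.ofReal (|g ω| ^ p)) ∂μ := by rw [lintegral_add_left (hmB n)]
      _ ≤ ∫⁻ ω, (ENNReal.ofReal (|f n ω| ^ p) +
          ENNReal.ofReal (|(|f n ω| ^ p - |f n ω - g ω| ^ p - |g ω| ^ p)|)) ∂μ :=
        lintegral_mono hpt
      _ = A n + D n := by rw [lintegral_add_left (hmA n)]
  -- pass to real numbers
  have habs : ∀ n, |(A n).toReal - (B n).toReal - C.toReal| ≤ (D n).toReal := by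
    intro n
    have e1 : (A n).toReal ≤ (B n).toReal + C.toReal + (D n).toReal := by
      have := ENNReal.toReal_mono (by
        exact ENNReal.add_ne_top.2 ⟨ENNReal.add_ne_top.2 ⟨hBfin n, hCfin⟩, hDfin n⟩) (h1 n)
      rwa [ENNReal.toReal_add (ENNReal.add_ne_top.2 ⟨hBfin n, hCfin⟩) (hDfin n),
        ENNReal.toReal_add (hBfin n) hCfin] at this
    have e2 : (B n).toReal + C.toReal ≤ (A n).toReal + (D n).toReal := by
      have := ENNReal.toReal_mono (ENNReal.add_ne_top.2 ⟨hAfin n, hDfin n⟩) (h2 n)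
      rwa [ENNReal.toReal_add (hBfin n) hCfin, ENNReal.toReal_add (hAfin n) (hDfin n)] at this
    rw [abs_le]; constructor <;> linarith
  have hdR : Tendsto (fun n => (D n).toReal) atTop (nhds 0) := by
    have := (ENNReal.tendsto_toReal (by simp : (0:ℝ≥0∞) ≠ ⊤)).comp hD0
    simpa [Function.comp_def] using this
  have hzero : Tendsto (fun n => (A n).toReal - (B n).toReal - C.toReal) atTop (nhds 0) := by
    apply squeeze_zero_norm _ hdR
    intro n
    rw [Real.norm_eq_abs]
    exact habs n
  have := hzero.add_const C.toReal
  simpa using this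

section Reduction

variable (N : ℕ) (p : ℝ)

noncomputable def gWeight : ℝ × (EuclideanSpace ℝ (Fin N) × EuclideanSpace ℝ (Fin N)) → ℝ≥0∞ :=
  fun z => (ENNReal.ofReal (dist z.2.1 z.2.2 ^ ((N : ℝ) + z.1 * p)))⁻¹

noncomputable def gMeasure (ν : Measure ℝ) :
    Measure (ℝ × (EuclideanSpace ℝ (Fin N) × EuclideanSpace ℝ (Fin N))) :=
  ((ν.restrict (Set.Ioo 0 1)).prod
    ((volume : Measure (EuclideanSpace ℝ (Fin N))).prod volume)).withDensity (gWeight N p)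

lemma gWeight_measurable : Measurable (gWeight N p) := by
  apply Measurable.inv
  apply Measurable.ennreal_ofReal
  exact (measurable_dist.comp measurable_snd).pow
    (measurable_const.add (measurable_fst.mul_const p))

lemma ofReal_abs_measurable {h : EuclideanSpace ℝ (Fin N) → ℝ} (hh : Measurable h) :
    Measurable fun z : ℝ × (EuclideanSpace ℝ (Fin N) × EuclideanSpace ℝ (Fin N)) =>
      ENNReal.ofReal (|h z.2.1 - h z.2.2| ^ p) :=
  (((hh.comp (measurable_fst.comp measurable_snd)).sub
    (hh.comp (measurable_snd.comp measurable_snd))).abs.pow measurable_const).ennreal_ofReal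

lemma superposed_energy_eq (ν : Measure ℝ) [IsFiniteMeasure ν]
    (h : EuclideanSpace ℝ (Fin N) → ℝ) (hh : Measurable h) :
    ∫⁻ s in Set.Ioo (0:ℝ) 1, gagliardoEnergy N s p h ∂ν =
      ∫⁻ z, ENNReal.ofReal (|h z.2.1 - h z.2.2| ^ p) ∂(gMeasure N p ν) := by
  rw [gMeasure, lintegral_withDensity_eq_lintegral_mul _ (gWeight_measurable N p)
    (ofReal_abs_measurable N p hh)]
  simp only [Pi.mul_apply]
  rw [lintegral_prod (fun z => gWeight N p z * ENNReal.ofReal (|h z.2.1 - h z.2.2| ^ p)) (((gWeight_measurable N p).mul (ofReal_abs_measurable N p hh)).aemeasurable)]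
  refine lintegral_congr fun s => ?_
  have hms : Measurable fun q : EuclideanSpace ℝ (Fin N) × EuclideanSpace ℝ (Fin N) =>
      gWeight N p (s, q) * ENNReal.ofReal (|h q.1 - h q.2| ^ p) :=
    (((gWeight_measurable N p).mul (ofReal_abs_measurable N p hh)).comp
      measurable_prodMk_left)
  rw [lintegral_prod _ hms.aemeasurable]
  refine lintegral_congr fun x => lintegral_congr fun y => ?_
  simp only [gWeight]
  rw [div_eq_mul_inv, mul_comm]

end Reduction

/-- Brezis–Lieb type lemma, Lemma 2.6. If `u_n → u` a.e. and the
superposed Gagliardo energies `∫_{(0,1)} J_{s,p}(u_n) dν(s)` are uniformly bounded, then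
`∫ J_{s,p}(u) dν = lim (∫ J_{s,p}(u_n) dν − ∫ J_{s,p}(u_n − u) dν)`. -/
theorem brezis_lieb_superposition (N : ℕ) (hN : 1 ≤ N) (p : ℝ) (hp : 1 < p)
    (ν : Measure ℝ) [IsFiniteMeasure ν]
    (u : ℕ → EuclideanSpace ℝ (Fin N) → ℝ)
    (v : EuclideanSpace ℝ (Fin N) → ℝ)
    (hu : ∀ n, Measurable (u n)) (hv : Measurable v)
    (hae : ∀ᵐ x : EuclideanSpace ℝ (Fin N),
      Tendsto (fun n => u n x) atTop (nhds (v x)))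
    (hbdd : (⨆ n, ∫⁻ s in Set.Ioo (0:ℝ) 1, gagliardoEnergy N s p (u n) ∂ν) < ⊤) :
    Tendsto (fun n =>
        (∫⁻ s in Set.Ioo (0:ℝ) 1, gagliardoEnergy N s p (u n) ∂ν).toReal -
        (∫⁻ s in Set.Ioo (0:ℝ) 1,
          gagliardoEnergy N s p (fun x => u n x - v x) ∂ν).toReal)
      atTop
      (nhds (∫⁻ s in Set.Ioo (0:ℝ) 1, gagliardoEnergy N s p v ∂ν).toReal) := by
  classical
  set μ := gMeasure N p ν with hμ
  have heq : ∀ n, (∫⁻ s in Set.Ioo (0:ℝ) 1, gagliardoEnergy N s p (u n) ∂ν) =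
      ∫⁻ z, ENNReal.ofReal (|u n z.2.1 - u n z.2.2| ^ p) ∂μ := fun n =>
    superposed_energy_eq N p ν (u n) (hu n)
  have heqv : (∫⁻ s in Set.Ioo (0:ℝ) 1, gagliardoEnergy N s p v ∂ν) =
      ∫⁻ z, ENNReal.ofReal (|v z.2.1 - v z.2.2| ^ p) ∂μ := superposed_energy_eq N p ν v hv
  have heqd : ∀ n, (∫⁻ s in Set.Ioo (0:ℝ) 1,
      gagliardoEnergy N s p (fun x => u n x - v x) ∂ν) =
      ∫⁻ z, ENNReal.ofReal (|(u n z.2.1 - u n z.2.2) - (v z.2.1 - v z.2.2)| ^ p) ∂μ := by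
    intro n
    rw [superposed_energy_eq N p ν (fun x => u n x - v x) ((hu n).sub hv)]
    exact lintegral_congr fun z => by
      rw [show (u n z.2.1 - v z.2.1) - (u n z.2.2 - v z.2.2) =
        (u n z.2.1 - u n z.2.2) - (v z.2.1 - v z.2.2) by ring]
  -- a.e. convergence with respect to μ
  set S := toMeasurable (volume : Measure (EuclideanSpace ℝ (Fin N)))
    {x | ¬ Tendsto (fun n => u n x) atTop (nhds (v x))} with hSdef
  have hS0 : volume S = 0 := by
    rw [hSdef, measure_toMeasurable]
    exact ae_iff.mp hae
  have hρ : ((volume : Measure (EuclideanSpace ℝ (Fin N))).prod volume) {q : EuclideanSpace ℝ (Fin N) × EuclideanSpace ℝ (Fin N) | q.1 ∈ S ∨ q.2 ∈ S} = 0 := by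
    refine measure_mono_null (?_ : _ ⊆ (S ×ˢ Set.univ) ∪ (Set.univ ×ˢ S)) ?_
    · rintro ⟨x, y⟩ h
      rcases h with h | h
      · exact Or.inl ⟨h, trivial⟩
      · exact Or.inr ⟨trivial, h⟩
    · refine measure_union_null ?_ ?_
      · rw [Measure.prod_prod, hS0, zero_mul]
      · rw [Measure.prod_prod, hS0, mul_zero]
  have hμ0 : μ {z : ℝ × (EuclideanSpace ℝ (Fin N) × EuclideanSpace ℝ (Fin N)) | z.2.1 ∈ S ∨ z.2.2 ∈ S} = 0 := by
    refine withDensity_absolutelyContinuous _ _ ?_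
    refine measure_mono_null
      (?_ : _ ⊆ Set.univ ×ˢ {q : EuclideanSpace ℝ (Fin N) × EuclideanSpace ℝ (Fin N) | q.1 ∈ S ∨ q.2 ∈ S}) ?_
    · exact fun z hz => ⟨trivial, hz⟩
    · rw [Measure.prod_prod, hρ, mul_zero]
  have haeμ : ∀ᵐ z ∂μ, Tendsto (fun n => u n z.2.1 - u n z.2.2) atTop
      (nhds (v z.2.1 - v z.2.2)) := by
    have h1 : ∀ᵐ z ∂μ, ¬(z.2.1 ∈ S ∨ z.2.2 ∈ S) := by
      rw [ae_iff]
      exact measure_mono_null (fun z hz => not_not.mp hz) hμ0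
    filter_upwards [h1] with z hz
    push_neg at hz
    obtain ⟨h1', h2'⟩ := hz
    have t1 : Tendsto (fun n => u n z.2.1) atTop (nhds (v z.2.1)) := by
      by_contra hcon
      exact h1' (subset_toMeasurable _ _ hcon)
    have t2 : Tendsto (fun n => u n z.2.2) atTop (nhds (v z.2.2)) := by
      by_contra hcon
      exact h2' (subset_toMeasurable _ _ hcon)
    exact t1.sub t2
  have hbdd' : (⨆ n, ∫⁻ z, ENNReal.ofReal (|u n z.2.1 - u n z.2.2| ^ p) ∂μ) < ⊤ := by
    rw [show (⨆ n, ∫⁻ z, ENNReal.ofReal (|u n z.2.1 - u n z.2.2| ^ p) ∂μ) =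
      ⨆ n, ∫⁻ s in Set.Ioo (0:ℝ) 1, gagliardoEnergy N s p (u n) ∂ν from
      iSup_congr fun n => (heq n).symm]
    exact hbdd
  have hfm : ∀ n, Measurable fun z : ℝ × (EuclideanSpace ℝ (Fin N) × EuclideanSpace ℝ (Fin N)) => u n z.2.1 - u n z.2.2 := fun n =>
    ((hu n).comp measurable_snd.fst).sub ((hu n).comp measurable_snd.snd)
  have hgm : Measurable fun z : ℝ × (EuclideanSpace ℝ (Fin N) × EuclideanSpace ℝ (Fin N)) => v z.2.1 - v z.2.2 :=
    (hv.comp measurable_snd.fst).sub (hv.comp measurable_snd.snd)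
  have hBL := brezis_lieb_general μ hp (fun n z => u n z.2.1 - u n z.2.2)
    (fun z => v z.2.1 - v z.2.2) hfm hgm haeμ hbdd'
  simp only [heq, heqv, heqd]
  exact hBL
end

section
/- Let H be a real Hilbert space, let E be a real normed vector space, and let T : H → E be a compact continuous linear operator. Let (B_k)_{k∈ℕ} be a nonincreasing sequence of closed linear subspaces of H (B_{k+1} ⊆ B_k for all k) with ⋂_{k∈ℕ} B_k = {0}. Define β_k = sup { ‖T u‖_E : u ∈ B_k, ‖u‖_H = 1 } (interpreted as 0 if the set is empty). Then β_k → 0 as k → ∞. -/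
open Filter

/-- Auxiliary: the orthogonal projections onto a decreasing sequence of subspaces with
trivial intersection tend to zero pointwise. -/
theorem proj_tendsto_zero_aux {H : Type*} [NormedAddCommGroup H] [InnerProductSpace ℝ H]
    [CompleteSpace H] (B : ℕ → Submodule ℝ H) [inst : ∀ k, Submodule.HasOrthogonalProjection (B k)]
    (hBclosed : ∀ k, IsClosed (B k : Set H))
    (hBmono : ∀ k, B (k + 1) ≤ B k)
    (hBinf : (⋂ k, (B k : Set H)) = {0}) (z : H) :
    Tendsto (fun k => ((Submodule.orthogonalProjection (B k) z : H))) atTop (nhds 0) := by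
  have hanti : Antitone B := antitone_nat_of_succ_le hBmono
  set P : ℕ → H := fun k => (Submodule.orthogonalProjection (B k) z : H) with hP
  have key : ∀ m n, m ≤ n → ‖P m - P n‖ ^ 2 = ‖P m‖ ^ 2 - ‖P n‖ ^ 2 := by
    intro m n h
    have h1 : (Submodule.orthogonalProjection (B n) (P m) : H) = P n := by
      rw [hP]
      exact congrArg _ (Submodule.orthogonalProjection_starProjection_of_le (hanti h) z)
    have h2 := Submodule.orthogonalProjectionFn_norm_sq (B n) (P m)
    rw [Submodule.orthogonalProjectionFn_eq, h1] at h2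
    nlinarith [h2]
  have hantisq : Antitone (fun k => ‖P k‖ ^ 2) := by
    intro m n h
    have := key m n h
    show ‖P n‖ ^ 2 ≤ ‖P m‖ ^ 2
    nlinarith [sq_nonneg ‖P m - P n‖]
  have hbdd : BddBelow (Set.range fun k => ‖P k‖ ^ 2) :=
    ⟨0, by rintro x ⟨k, rfl⟩; positivity⟩
  have hconv : Tendsto (fun k => ‖P k‖ ^ 2) atTop (nhds (⨅ k, ‖P k‖ ^ 2)) :=
    tendsto_atTop_ciInf hantisq hbdd
  have hcauchy : CauchySeq P := by
    rw [Metric.cauchySeq_iff']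
    intro ε hε
    have hc : CauchySeq (fun k => ‖P k‖ ^ 2) := hconv.cauchySeq
    rw [Metric.cauchySeq_iff'] at hc
    obtain ⟨N, hN⟩ := hc (ε ^ 2) (by positivity)
    refine ⟨N, fun n hn => ?_⟩
    have h1 := hN n hn
    rw [Real.dist_eq] at h1
    have h2 := key N n hn
    have h3 : dist (P n) (P N) = ‖P N - P n‖ := by rw [dist_comm, dist_eq_norm]
    rw [h3]
    have h4 : ‖P N‖ ^ 2 - ‖P n‖ ^ 2 < ε ^ 2 := by
      rw [abs_sub_comm] at h1
      exact lt_of_le_of_lt (le_abs_self _) h1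
    nlinarith [norm_nonneg (P N - P n), hε]
  obtain ⟨y, hy⟩ := cauchySeq_tendsto_of_complete hcauchy
  have hymem : ∀ m, y ∈ B m := by
    intro m
    refine (hBclosed m).mem_of_tendsto hy ?_
    filter_upwards [eventually_ge_atTop m] with n hn
    exact hanti hn (Submodule.orthogonalProjection (B n) z).2
  have hy0 : y = 0 := by
    have : y ∈ ⋂ k, (B k : Set H) := Set.mem_iInter.mpr fun k => hymem k
    rw [hBinf] at this
    exact this
  rwa [hy0] at hy

/-- abstract form of Lemma 4.1. Let `T : H → E` be a compact continuous
linear operator from a real Hilbert space to a real normed space, and let `(B k)` be a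
nonincreasing sequence of closed subspaces of `H` with trivial intersection. Then the
quantities `β k = sup {‖T u‖ : u ∈ B k, ‖u‖ = 1}` tend to `0`. -/
theorem sup_norm_on_tail_subspaces_tendsto_zero
    (H : Type*) [NormedAddCommGroup H] [InnerProductSpace ℝ H] [CompleteSpace H]
    (E : Type*) [NormedAddCommGroup E] [NormedSpace ℝ E]
    (T : H →L[ℝ] E) (hT : IsCompactOperator (⇑T))
    (B : ℕ → Submodule ℝ H)
    (hBclosed : ∀ k, IsClosed (B k : Set H))
    (hBmono : ∀ k, B (k + 1) ≤ B k)
    (hBinf : (⋂ k, (B k : Set H)) = {0}) :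
    Tendsto (fun k => sSup ((fun u => ‖T u‖) '' {u : H | u ∈ B k ∧ ‖u‖ = 1}))
      atTop (nhds 0) := by
  haveI inst : ∀ k, Submodule.HasOrthogonalProjection (B k) := fun k =>
    haveI : CompleteSpace (B k) := (hBclosed k).completeSpace_coe
    inferInstance
  set S : ℕ → Set ℝ := fun k => (fun u => ‖T u‖) '' {u : H | u ∈ B k ∧ ‖u‖ = 1} with hS
  set f : ℕ → ℝ := fun k => sSup (S k) with hf
  have hSbdd : ∀ k, BddAbove (S k) := by
    intro k
    refine ⟨‖T‖, ?_⟩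
    rintro x ⟨u, ⟨_, hu⟩, rfl⟩
    calc ‖T u‖ ≤ ‖T‖ * ‖u‖ := T.le_opNorm u
    _ = ‖T‖ := by rw [hu, mul_one]
  have hfnonneg : ∀ k, 0 ≤ f k := by
    intro k
    apply Real.sSup_nonneg
    rintro x ⟨u, _, rfl⟩
    exact norm_nonneg _
  have hfanti : Antitone f := by
    apply antitone_nat_of_succ_le
    intro k
    rcases Set.eq_empty_or_nonempty (S (k + 1)) with h | h
    · rw [hf]; simp only; rw [h, Real.sSup_empty]; exact hfnonneg k
    · refine csSup_le_csSup (hSbdd k) h ?_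
      rintro x ⟨u, ⟨hu1, hu2⟩, rfl⟩
      exact ⟨u, ⟨hBmono k hu1, hu2⟩, rfl⟩
  have hbddbelow : BddBelow (Set.range f) := ⟨0, by rintro x ⟨k, rfl⟩; exact hfnonneg k⟩
  have hconv : Tendsto f atTop (nhds (⨅ k, f k)) := tendsto_atTop_ciInf hfanti hbddbelow
  set L := ⨅ k, f k with hL
  have hL0 : 0 ≤ L := le_ciInf hfnonneg
  have hLle : L ≤ 0 := by
    by_contra hpos
    push_neg at hpos
    -- choose unit vectors u k ∈ B k with ‖T (u k)‖ > L / 2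
    have hchoose : ∀ k, ∃ u : H, u ∈ B k ∧ ‖u‖ = 1 ∧ L / 2 < ‖T u‖ := by
      intro k
      have hLf : L ≤ f k := ciInf_le hbddbelow k
      have hne : (S k).Nonempty := by
        by_contra hemp
        rw [Set.not_nonempty_iff_eq_empty] at hemp
        have : f k = 0 := by rw [hf]; simp only; rw [hemp, Real.sSup_empty]
        linarith
      obtain ⟨x, hxS, hx⟩ := exists_lt_of_lt_csSup hne (by linarith : L / 2 < sSup (S k))
      obtain ⟨u, ⟨hu1, hu2⟩, rfl⟩ := hxS
      exact ⟨u, hu1, hu2, hx⟩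
    choose u hu1 hu2 hu3 using hchoose
    -- compactness: extract a convergent subsequence of T (u k)
    have hK : IsCompact (closure (⇑T '' Metric.closedBall 0 1)) :=
      hT.isCompact_closure_image_closedBall 1
    have hmemK : ∀ k, T (u k) ∈ closure (⇑T '' Metric.closedBall 0 1) := fun k =>
      subset_closure ⟨u k, by simp [hu2 k], rfl⟩
    obtain ⟨y, -, φ, hφ, hyconv⟩ := hK.tendsto_subseq hmemK
    have hynorm : L / 2 ≤ ‖y‖ := by
      refine le_of_tendsto_of_tendsto tendsto_const_nhds hyconv.norm ?_
      filter_upwards with j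
      exact le_of_lt (hu3 (φ j))
    have hyne : y ≠ 0 := by
      intro h; rw [h, norm_zero] at hynorm; linarith
    obtain ⟨g, hg1, hg2⟩ := exists_dual_vector ℝ y (norm_ne_zero_iff.mpr hyne)
    set z : H := (InnerProductSpace.toDual ℝ H).symm (g.comp T) with hz
    have hinner : ∀ x : H, inner ℝ z x = g (T x) := fun x =>
      InnerProductSpace.toDual_symm_apply
    -- the sequence g (T (u k)) tends to 0
    have h0 : Tendsto (fun k => g (T (u k))) atTop (nhds 0) := by
      have hb : ∀ k, ‖g (T (u k))‖ ≤ ‖(Submodule.orthogonalProjection (B k) z : H)‖ := by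
        intro k
        have e1 : (Submodule.orthogonalProjection (B k) (u k) : H) = u k :=
          Submodule.starProjection_eq_self_iff.mpr (hu1 k)
        have e2 : (inner ℝ z (u k) : ℝ) = inner ℝ ((Submodule.orthogonalProjection (B k) z : H)) (u k) := by
          conv_lhs => rw [← e1]
          exact (Submodule.inner_starProjection_left_eq_right _ z (u k)).symm
        calc ‖g (T (u k))‖ = ‖(inner ℝ ((Submodule.orthogonalProjection (B k) z : H)) (u k) : ℝ)‖ := by
              rw [← hinner, e2]
        _ ≤ ‖(Submodule.orthogonalProjection (B k) z : H)‖ * ‖u k‖ := norm_inner_le_norm _ _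
        _ = ‖(Submodule.orthogonalProjection (B k) z : H)‖ := by rw [hu2 k, mul_one]
      exact squeeze_zero_norm hb
        (by simpa using (proj_tendsto_zero_aux B hBclosed hBmono hBinf z).norm)
    have h1 : Tendsto (fun j => g (T (u (φ j)))) atTop (nhds (g y)) :=
      (g.continuous.tendsto y).comp hyconv
    have h2 : Tendsto (fun j => g (T (u (φ j)))) atTop (nhds 0) :=
      h0.comp hφ.tendsto_atTop
    have : g y = 0 := tendsto_nhds_unique h1 h2
    rw [this] at hg2
    have : ‖y‖ = 0 := by exact_mod_cast hg2.symm
    rw [this] at hynorm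
    linarith
  have hLeq : L = 0 := le_antisymm hLle hL0
  rwa [hLeq] at hconv
end
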